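/- arXiv:2407.00204 — 3 statements merged into one kernel-verified Lean document; each statement's English description precedes it below -/
import Mathlib

section
/- Let t ≥ 1 and let m_1, …, m_t be integers with each m_i ≥ 2, and set n = m_1 + ⋯ + m_t. If n is odd and the Oberwolfach Problem OP(m_1, …, m_t) has a solution, then HOP(2m_1, …, 2m_t) has a solution; that is, the complete graph K_{2n} admits a semi-uniform 1-factorization of type (2m_1, …, 2m_t). -/
open SimpleGraph

/-- `M` is a 1-factorization of the complete graph `K_{2n}` on the vertex set `Fin (2*n)`:
a partition of its edge set into `2*n - 2 + 1` (which equals `2*n - 1` for `n ≥ 1`)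
perfect matchings, each matching being recorded as the simple graph consisting of its edges. -/
def IsOneFactorization (n : ℕ)
    (M : Fin (2 * n - 2 + 1) → SimpleGraph (Fin (2 * n))) : Prop :=
  (∀ i : Fin (2 * n - 2 + 1), ∀ v : Fin (2 * n), ∃! w, (M i).Adj v w) ∧
  (∀ v w : Fin (2 * n), v ≠ w → ∃! i : Fin (2 * n - 2 + 1), (M i).Adj v w)

/-- `M` is a semi-uniform 1-factorization of `K_{2n}` of type `(l 0, …, l (t-1))`:
a 1-factorization `M 0, M 1, …` of `K_{2n}` such that for every index `i ≠ 0` the multiset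
of cardinalities of the connected components of the spanning subgraph with edge set
`M 0 ∪ M i` equals the multiset `{l 0, …, l (t-1)}` (expressed via a size-preserving
bijection between the components and `Fin t`). -/
def IsSemiUniformOneFactorization (n : ℕ) {t : ℕ} (l : Fin t → ℕ)
    (M : Fin (2 * n - 2 + 1) → SimpleGraph (Fin (2 * n))) : Prop :=
  IsOneFactorization n M ∧
  ∀ i : Fin (2 * n - 2 + 1), i ≠ 0 →
    ∃ e : (M 0 ⊔ M i).ConnectedComponent ≃ Fin t,
      ∀ c : (M 0 ⊔ M i).ConnectedComponent, c.supp.ncard = l (e c)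

/-- The Honeymoon Oberwolfach Problem `HOP(l 0, …, l (t-1))`
(where `l 0 + ⋯ + l (t-1) = 2*n`) has a solution, i.e. the complete graph `K_{2n}`
admits a semi-uniform 1-factorization of type `(l 0, …, l (t-1))`. -/
def HOPSolvable (n : ℕ) {t : ℕ} (l : Fin t → ℕ) : Prop :=
  ∃ M : Fin (2 * n - 2 + 1) → SimpleGraph (Fin (2 * n)),
    IsSemiUniformOneFactorization n l M

/-- For odd `n` and `m 0 + ⋯ + m (t-1) = n`, the Oberwolfach Problem
`OP(m 0, …, m (t-1))` has a solution: the edge set of `K_n` can be partitioned into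
`(n-1)/2` parts, each being the edge set of a spanning subgraph of `K_n` in which every
vertex has degree `2` and whose connected components have vertex-set cardinalities
`m 0, …, m (t-1)` as a multiset. -/
def OPSolvable (n : ℕ) {t : ℕ} (m : Fin t → ℕ) : Prop :=
  ∃ F : Fin ((n - 1) / 2) → SimpleGraph (Fin n),
    (∀ v w : Fin n, v ≠ w → ∃! j : Fin ((n - 1) / 2), (F j).Adj v w) ∧
    (∀ j : Fin ((n - 1) / 2), ∀ v : Fin n, ((F j).neighborSet v).ncard = 2) ∧
    (∀ j : Fin ((n - 1) / 2),
      ∃ e : (F j).ConnectedComponent ≃ Fin t,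
        ∀ c : (F j).ConnectedComponent, c.supp.ncard = m (e c))


/-!
Double every vertex of `K_n`: take `Fin n × Bool` as the vertex set of `K_{2n}` and let the first
1-factor join `(v, false)` to `(v, true)`. Every 2-factor `F` of a solution of `OP(m)` blows up to
the 4-regular graph of the four lifts `(v, a)(w, b)` of its edges `vw`, and this graph splits into
four perfect matchings, indexed by `k ∈ 𝔽₂²`: label the two edges at each vertex by a bit, colour
`F` properly with three colours, and let the `k`-th matching send `(v, a)` along the edge at `v`
labelled `a + φ_{c(v)}(k)`, where `φ₀, φ₁, φ₂` are the three nonzero linear forms on `𝔽₂²`. As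
`c(v) ≠ c(w)` on an edge and any two of the `φ`'s form a basis of the dual, every lift of `vw`
lies in exactly one matching. Together with the first 1-factor each such matching connects
exactly the fibres over one cycle of `F`, so a cycle of length `m i` becomes a component of size
`2 * m i`; and the `(n - 1) / 2` factors give the `4 * ((n - 1) / 2) = 2 * n - 2` remaining
1-factors of `K_{2n}`.
-/

namespace SimpleGraph

variable {V : Type*} {G : SimpleGraph V}

theorem colorable_succ_of_forall_ncard_neighborSet_le [Finite V] {k : ℕ}
    (h : ∀ v, (G.neighborSet v).ncard ≤ k) : G.Colorable (k + 1) := by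
  classical
  cases nonempty_fintype V
  suffices ∀ s : Finset V, ∃ c : V → Fin (k + 1), ∀ v ∈ s, ∀ w ∈ s, G.Adj v w → c v ≠ c w by
    obtain ⟨c, hc⟩ := this Finset.univ
    exact ⟨Coloring.mk c fun hvw => hc _ (Finset.mem_univ _) _ (Finset.mem_univ _) hvw⟩
  intro s
  induction s using Finset.induction_on with
  | empty => exact ⟨0, by simp⟩
  | insert a s ha ih =>
    obtain ⟨c, hc⟩ := ih
    obtain ⟨f, hf⟩ : ∃ f, f ∉ c '' G.neighborSet a := by
      rw [← Set.ne_univ_iff_exists_notMem]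
      intro huniv
      have := (Set.ncard_image_le (f := c) (Set.toFinite _)).trans (h a)
      rw [huniv, Set.ncard_univ, Nat.card_eq_fintype_card, Fintype.card_fin] at this
      omega
    have hne {u} (hu : u ∈ s) : u ≠ a := ne_of_mem_of_not_mem hu ha
    refine ⟨Function.update c a f, fun v hv w hw hvw => ?_⟩
    rcases Finset.mem_insert.mp hv with rfl | hvs <;>
      rcases Finset.mem_insert.mp hw with rfl | hws
    · exact (G.irrefl hvw).elim
    · rw [Function.update_self, Function.update_of_ne (hne hws)]
      exact fun hfw => hf ⟨w, hvw, hfw.symm⟩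
    · rw [Function.update_self, Function.update_of_ne (hne hvs)]
      exact fun hfv => hf ⟨v, hvw.symm, hfv⟩
    · rw [Function.update_of_ne (hne hvs), Function.update_of_ne (hne hws)]
      exact hc v hvs w hws hvw

/-- Data for splitting the four lifts of the edges of a 2-regular graph into four perfect
matchings. -/
structure PortLabelling (G : SimpleGraph V) where
  port : V → V → Bool
  existsUnique_adj_port : ∀ v s, ∃! w, G.Adj v w ∧ port v w = s
  color : G.Coloring (Fin 3)

theorem nonempty_portLabelling [Finite V] (h : ∀ v, (G.neighborSet v).ncard = 2) :
    Nonempty (PortLabelling G) := by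
  classical
  choose a b hab hnbr using fun v => Set.ncard_eq_two.mp (h v)
  have hadj v w : G.Adj v w ↔ w = a v ∨ w = b v := by
    rw [← mem_neighborSet, hnbr]; rfl
  refine ⟨⟨fun v w => decide (w = b v), fun v s => ?_,
    (colorable_succ_of_forall_ncard_neighborSet_le fun v => (h v).le).some⟩⟩
  cases s
  · refine ⟨a v, ⟨(hadj v _).mpr (.inl rfl), by simp [hab v]⟩, fun w ⟨hvw, hw⟩ => ?_⟩
    exact ((hadj v w).mp hvw).resolve_right (by simpa using hw)
  · exact ⟨b v, ⟨(hadj v _).mpr (.inr rfl), by simp⟩, fun w ⟨_, hw⟩ => by simpa using hw⟩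

/-- The three nonzero linear forms on `𝔽₂²`. -/
def parity : Fin 3 → Bool × Bool → Bool
  | 0, k => k.1
  | 1, k => k.2
  | 2, k => xor k.1 k.2

theorem bijective_parity_pair {p q : Fin 3} (h : p ≠ q) :
    Function.Bijective fun k => (parity p k, parity q k) := by
  revert p q; decide

theorem existsUnique_parity {p q : Fin 3} (h : p ≠ q) (a b : Bool) :
    ∃! k, parity p k = a ∧ parity q k = b := by
  simpa only [Prod.mk.injEq] using (bijective_parity_pair h).existsUnique (a, b)

variable (V) in
def fiberMatching : SimpleGraph (V × Bool) where
  Adj x y := x.1 = y.1 ∧ x.2 ≠ y.2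
  symm := ⟨fun _ _ h => ⟨h.1.symm, h.2.symm⟩⟩
  loopless := ⟨fun _ h => h.2 rfl⟩

theorem fiberMatching_existsUnique_adj (x : V × Bool) : ∃! y, (fiberMatching V).Adj x y :=
  ⟨(x.1, !x.2), ⟨rfl, by simp⟩, fun _ ⟨h1, h2⟩ => Prod.ext h1.symm (Bool.eq_not.mpr h2.symm)⟩

theorem reachable_fiberMatching_sup {H : SimpleGraph (V × Bool)} (v : V) (a b : Bool) :
    (fiberMatching V ⊔ H).Reachable (v, a) (v, b) := by
  by_cases hab : a = b
  · rw [hab]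
  · exact Adj.reachable (Or.inl ⟨rfl, hab⟩)

namespace PortLabelling

variable (P : PortLabelling G)

/-- The bit at which the `k`-th lift of the edge `vw` meets the fibre over `v`. -/
def level (k : Bool × Bool) (v w : V) : Bool :=
  xor (parity (P.color v) k) (P.port v w)

def liftMatching (k : Bool × Bool) : SimpleGraph (V × Bool) where
  Adj x y := G.Adj x.1 y.1 ∧ x.2 = P.level k x.1 y.1 ∧ y.2 = P.level k y.1 x.1
  symm := ⟨fun _ _ h => ⟨h.1.symm, h.2.2, h.2.1⟩⟩
  loopless := ⟨fun _ h => G.irrefl h.1⟩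

theorem liftMatching_existsUnique_adj (k : Bool × Bool) (x : V × Bool) :
    ∃! y, (P.liftMatching k).Adj x y := by
  obtain ⟨v, a⟩ := x
  obtain ⟨w, ⟨hvw, hport⟩, huniq⟩ := P.existsUnique_adj_port v (xor (parity (P.color v) k) a)
  refine ⟨(w, P.level k w v), ⟨hvw, by simp [level, hport], rfl⟩, ?_⟩
  rintro ⟨w', b⟩ ⟨hvw', ha, hb⟩
  obtain rfl : w' = w := huniq w' ⟨hvw', by simp [show a = P.level k v w' from ha, level]⟩
  exact Prod.ext rfl hb

theorem existsUnique_liftMatching_adj {v w : V} (hvw : G.Adj v w) (a b : Bool) :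
    ∃! k, (P.liftMatching k).Adj (v, a) (w, b) := by
  have hxor : ∀ a p l : Bool, (a = xor p l ↔ p = xor a l) := by decide
  refine (existsUnique_congr fun k => ?_).mpr
    (existsUnique_parity (P.color.valid hvw) (xor a (P.port v w)) (xor b (P.port w v)))
  change G.Adj v w ∧ a = P.level k v w ∧ b = P.level k w v ↔ _
  simp only [level, hvw, true_and, hxor a, hxor b]

theorem reachable_fiberMatching_sup_liftMatching_iff (k : Bool × Bool) {x y : V × Bool} :
    (fiberMatching V ⊔ P.liftMatching k).Reachable x y ↔ G.Reachable x.1 y.1 := by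
  constructor
  · rintro ⟨p⟩
    induction p with
    | nil => rfl
    | cons hadj _ ih =>
      rcases hadj with hfib | hlift
      · exact hfib.1 ▸ ih
      · exact hlift.1.reachable.trans ih
  · obtain ⟨v, a⟩ := x
    obtain ⟨w, b⟩ := y
    intro hvw
    obtain ⟨p⟩ : G.Reachable v w := hvw
    induction p generalizing a with
    | nil => exact reachable_fiberMatching_sup _ a b
    | cons hvu _ ih =>
      have hlift : (fiberMatching V ⊔ P.liftMatching k).Adj
          (_, P.level k _ _) (_, P.level k _ _) := Or.inr ⟨hvu, rfl, rfl⟩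
      exact ((reachable_fiberMatching_sup _ a _).trans hlift.reachable).trans (ih _)

end PortLabelling

theorem exists_connectedComponentEquiv_of_reachable_iff {β : Type*} [Nonempty β]
    {H : SimpleGraph (V × β)} (h : ∀ x y, H.Reachable x y ↔ G.Reachable x.1 y.1) :
    ∃ e : H.ConnectedComponent ≃ G.ConnectedComponent,
      ∀ c, c.supp.ncard = (e c).supp.ncard * Nat.card β := by
  let f : H.ConnectedComponent → G.ConnectedComponent :=
    ConnectedComponent.lift (fun x => G.connectedComponentMk x.1)
      fun x y p _ => ConnectedComponent.sound ((h x y).mp p.reachable)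
  have hf : Function.Bijective f := by
    refine ⟨fun c d => ?_, fun c => ?_⟩
    · induction c using ConnectedComponent.ind
      induction d using ConnectedComponent.ind
      simp [f, ConnectedComponent.eq, h]
    · induction c using ConnectedComponent.ind with | h v =>
      exact ⟨H.connectedComponentMk (v, Classical.arbitrary β), rfl⟩
  refine ⟨.ofBijective f hf, fun c => ?_⟩
  induction c using ConnectedComponent.ind with | h x =>
  have hsupp : (H.connectedComponentMk x).supp =
      (G.connectedComponentMk x.1).supp ×ˢ Set.univ := by
    ext y
    simp [ConnectedComponent.eq, h]
  rw [hsupp, Set.ncard_prod, Set.ncard_univ]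
  rfl

theorem ncard_supp_connectedComponentEquiv {W : Type*} {G' : SimpleGraph W} (φ : G ≃g G')
    (c : G.ConnectedComponent) : (φ.connectedComponentEquiv c).supp.ncard = c.supp.ncard := by
  rw [← Nat.card_coe_set_eq, ← Nat.card_coe_set_eq,
    Nat.card_congr (ConnectedComponent.isoEquivSupp φ c)]

section Doubling

variable {J : Type*} {F : J → SimpleGraph V} (P : ∀ j, PortLabelling (F j))

def doubling : Option (J × Bool × Bool) → SimpleGraph (V × Bool)
  | none => fiberMatching V
  | some (j, k) => (P j).liftMatching k

theorem doubling_existsUnique_adj (i : Option (J × Bool × Bool)) (x : V × Bool) :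
    ∃! y, (doubling P i).Adj x y := by
  rcases i with _ | ⟨j, k⟩
  exacts [fiberMatching_existsUnique_adj x, (P j).liftMatching_existsUnique_adj k x]

theorem existsUnique_doubling_adj (hF : ∀ v w, v ≠ w → ∃! j, (F j).Adj v w)
    {x y : V × Bool} (hxy : x ≠ y) : ∃! i, (doubling P i).Adj x y := by
  obtain ⟨v, a⟩ := x
  obtain ⟨w, b⟩ := y
  by_cases hvw : v = w
  · subst hvw
    refine ⟨none, ⟨rfl, fun hab => hxy (Prod.ext rfl hab)⟩, fun i hi => ?_⟩
    rcases i with _ | ⟨j, k⟩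
    exacts [rfl, ((F j).irrefl hi.1).elim]
  · obtain ⟨j, hj, hjuniq⟩ := hF v w hvw
    obtain ⟨k, hk, hkuniq⟩ := (P j).existsUnique_liftMatching_adj hj a b
    refine ⟨some (j, k), hk, fun i hi => ?_⟩
    rcases i with _ | ⟨j', k'⟩
    · exact (hvw hi.1).elim
    · obtain rfl := hjuniq j' hi.1
      rw [hkuniq k' hi]

end Doubling

end SimpleGraph

theorem hopSolvable_of_matchings {n t : ℕ} {l : Fin t → ℕ} {W ι : Type*} [Fintype ι]
    (eW : Fin (2 * n) ≃ W) (hι : Fintype.card ι = 2 * n - 2) (N : Option ι → SimpleGraph W)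
    (hmatch : ∀ i v, ∃! w, (N i).Adj v w) (hpart : ∀ v w, v ≠ w → ∃! i, (N i).Adj v w)
    (hcomp : ∀ i, ∃ e : (N none ⊔ N (some i)).ConnectedComponent ≃ Fin t,
      ∀ c, c.supp.ncard = l (e c)) :
    HOPSolvable n l := by
  let σ : Fin (2 * n - 2 + 1) ≃ Option ι :=
    (finSuccEquiv _).trans (Equiv.optionCongr (Fintype.equivFinOfCardEq hι).symm)
  have hσ0 : σ 0 = none := by simp [σ]
  refine ⟨fun i => (N (σ i)).comap eW, ⟨fun i v => ?_, fun v w hvw => ?_⟩, fun i hi => ?_⟩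
  · simpa [eW.existsUnique_congr_left] using hmatch (σ i) (eW v)
  · simpa [σ.existsUnique_congr_left] using hpart _ _ (eW.injective.ne hvw)
  · obtain ⟨i', hi'⟩ := Option.ne_none_iff_exists'.mp (hσ0 ▸ σ.injective.ne hi)
    obtain ⟨e, he⟩ := hcomp i'
    beta_reduce
    rw [hσ0, hi']
    let φ := Iso.comap eW (N none ⊔ N (some i'))
    exact ⟨φ.connectedComponentEquiv.trans e, fun c =>
      (ncard_supp_connectedComponentEquiv φ c).symm.trans (he _)⟩

theorem hop_solvable_of_odd_of_op_general (t : ℕ) (m : Fin t → ℕ) (n : ℕ)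
    (hodd : Odd n) (hop : OPSolvable n m) :
    HOPSolvable n (fun i => 2 * m i) := by
  obtain ⟨F, hpart, hdeg, hcomp⟩ := hop
  let P j : PortLabelling (F j) := (nonempty_portLabelling (hdeg j)).some
  refine hopSolvable_of_matchings (Fintype.equivOfCardEq (by simp [mul_comm]))
    (ι := Fin ((n - 1) / 2) × Bool × Bool) ?_ (doubling P) (doubling_existsUnique_adj P)
    (fun _ _ => existsUnique_doubling_adj P hpart) fun ⟨j, k⟩ => ?_
  · obtain ⟨r, rfl⟩ := hodd
    simp
    omega
  · obtain ⟨e, he⟩ := hcomp j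
    obtain ⟨e', he'⟩ := exists_connectedComponentEquiv_of_reachable_iff fun _ _ =>
      (P j).reachable_fiberMatching_sup_liftMatching_iff k
    refine ⟨e'.trans e, fun c => ?_⟩
    have hc := he' c
    rw [he, Nat.card_eq_fintype_card, Fintype.card_bool, mul_comm] at hc
    exact hc

theorem hop_solvable_of_odd_of_op (t : ℕ) (ht : 1 ≤ t) (m : Fin t → ℕ)
    (hm : ∀ i, 2 ≤ m i) (n : ℕ) (hn : ∑ i, m i = n)
    (hodd : Odd n) (hop : OPSolvable n m) :
    HOPSolvable n (fun i => 2 * m i) :=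
  hop_solvable_of_odd_of_op_general t m n hodd hop
end

section
/- Let t ≥ 1 and let m_1, …, m_t be integers with each m_i ≥ 2, and set n = m_1 + ⋯ + m_t. If n ≤ 9, then HOP(2m_1, …, 2m_t) has a solution; that is, the complete graph K_{2n} admits a semi-uniform 1-factorization of type (2m_1, …, 2m_t). -/
open SimpleGraph

/-!
Only finitely many types occur: after sorting, `(m_1, …, m_t)` is a partition of some `n ≤ 9`
into parts `≥ 2`, and solvability of `HOP` does not depend on the order of the parts. For each of
these partitions we record an explicit semi-uniform 1-factorization. Each matching `M_i` is a
fixed-point-free involution of the vertices; for `i ≠ 0` the 2-factor `M_0 ∪ M_i` is a disjoint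
union of cycles alternating between `M_0` and `M_i`, so it suffices to record one vertex on each
cycle and trace the cycle from there. All of this is verified by evaluation in the kernel. That
every sorted partition is covered follows by induction on the list of parts, since the finite
list of recorded partitions is closed under prepending a new smallest part.
-/

open Function

section Components

variable {V ι : Type*} {G : SimpleGraph V}

theorem List.IsChain.reachable {L : List V} (hL : L.IsChain G.Adj) {v w : V} (hv : v ∈ L)
    (hw : w ∈ L) : G.Reachable v w := by
  have hne : L ≠ [] := List.ne_nil_of_mem hv
  have hhead := hL.induction (G.Reachable (L.head hne)) L
    (fun _ _ hxy hx => hx.trans hxy.reachable) (fun _ => Reachable.refl _)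
  exact (hhead v hv).symm.trans (hhead w hw)

theorem SimpleGraph.Reachable.mem_of_forall_adj_mem {S : Set V}
    (hS : ∀ v w, v ∈ S → G.Adj v w → w ∈ S) {v w : V} (h : G.Reachable v w) (hv : v ∈ S) :
    w ∈ S := by
  rw [reachable_iff_reflTransGen] at h
  induction h with
  | refl => exact hv
  | tail _ hadj ih => exact hS _ _ ih hadj

theorem SimpleGraph.exists_equiv_connectedComponent_of_isChain (C : ι → List V)
    (hne : ∀ j, C j ≠ []) (hchain : ∀ j, (C j).IsChain G.Adj)
    (hclosed : ∀ j v w, v ∈ C j → G.Adj v w → w ∈ C j) (hcover : ∀ v, ∃! j, v ∈ C j) :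
    ∃ e : ι ≃ G.ConnectedComponent, ∀ j, (e j).supp = {v | v ∈ C j} := by
  let rep j := (C j).head (hne j)
  have hrep j : rep j ∈ C j := List.head_mem _
  have hsupp j : (G.connectedComponentMk (rep j)).supp = {v | v ∈ C j} := by
    ext v
    rw [ConnectedComponent.mem_supp_iff, ConnectedComponent.eq]
    exact ⟨fun h => h.symm.mem_of_forall_adj_mem (hclosed j) (hrep j),
      fun h => (hchain j).reachable h (hrep j)⟩
  have hbij : Bijective fun j => G.connectedComponentMk (rep j) := by
    refine ⟨fun j j' h => ?_, ConnectedComponent.ind fun v => ?_⟩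
    · have : rep j' ∈ {v | v ∈ C j} := hsupp j ▸ (ConnectedComponent.mem_supp_iff _ _).mpr h.symm
      exact (hcover (rep j')).unique this (hrep j')
    · obtain ⟨j, hj, -⟩ := hcover v
      exact ⟨j, ConnectedComponent.sound ((hchain j).reachable (hrep j) hj)⟩
  exact ⟨Equiv.ofBijective _ hbij, hsupp⟩

end Components

section Involutions

variable {V : Type*}

def involutionGraph (σ : V → V) : SimpleGraph V :=
  SimpleGraph.fromRel fun v w => σ v = w

theorem involutionGraph_adj {σ : V → V} (hσ : Involutive σ) (hfix : ∀ v, σ v ≠ v) {v w : V} :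
    (involutionGraph σ).Adj v w ↔ σ v = w := by
  simp only [involutionGraph, fromRel_adj]
  refine ⟨fun ⟨_, h⟩ => h.elim id fun h => h ▸ hσ w, fun h => ⟨?_, Or.inl h⟩⟩
  rintro rfl
  exact hfix v h

def alternatingWalk (σ τ : V → V) : ℕ → V → List V
  | 0, _ => []
  | k + 1, v => v :: alternatingWalk τ σ k (σ v)

end Involutions

section CycleCovers

variable {V ι : Type*}

def IsAlternatingCycleCover (σ τ : V → V) (C : ι → List V) : Prop :=
  (∀ j, C j ≠ [] ∧ (C j).IsChain (fun v w => σ v = w ∨ τ v = w) ∧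
    ∀ v ∈ C j, σ v ∈ C j ∧ τ v ∈ C j) ∧
  (∀ v, ∃ j, v ∈ C j) ∧ ∀ j j', ∀ v ∈ C j, v ∈ C j' → j = j'

instance [Fintype V] [DecidableEq V] [Fintype ι] [DecidableEq ι] (σ τ : V → V) (C : ι → List V) :
    Decidable (IsAlternatingCycleCover σ τ C) := by
  unfold IsAlternatingCycleCover; infer_instance

theorem IsAlternatingCycleCover.exists_equiv {σ τ : V → V} (hσ : Involutive σ)
    (hσfix : ∀ v, σ v ≠ v) (hτ : Involutive τ) (hτfix : ∀ v, τ v ≠ v) {C : ι → List V}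
    (hC : IsAlternatingCycleCover σ τ C) :
    ∃ e : ι ≃ (involutionGraph σ ⊔ involutionGraph τ).ConnectedComponent,
      ∀ j, (e j).supp = {v | v ∈ C j} := by
  obtain ⟨hcyc, hcover, hdisj⟩ := hC
  have hadj v w : (involutionGraph σ ⊔ involutionGraph τ).Adj v w ↔ σ v = w ∨ τ v = w := by
    rw [sup_adj, involutionGraph_adj hσ hσfix, involutionGraph_adj hτ hτfix]
  refine exists_equiv_connectedComponent_of_isChain C (fun j => (hcyc j).1)
    (fun j => (hcyc j).2.1.imp fun v w => (hadj v w).mpr) (fun j v w hv hvw => ?_)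
    (fun v => ?_)
  · rcases (hadj v w).mp hvw with rfl | rfl
    exacts [((hcyc j).2.2 v hv).1, ((hcyc j).2.2 v hv).2]
  · obtain ⟨j, hj⟩ := hcover v
    exact ⟨j, hj, fun j' hj' => hdisj j' j v hj' hj⟩

end CycleCovers

theorem isOneFactorization_involutionGraph {n : ℕ}
    (f : Fin (2 * n - 2 + 1) → Fin (2 * n) → Fin (2 * n)) (hinv : ∀ i, Involutive (f i))
    (hfix : ∀ i v, f i v ≠ v) (hinj : ∀ v, Injective (f · v)) :
    IsOneFactorization n fun i => involutionGraph (f i) := by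
  have hadj i {v w} := involutionGraph_adj (hinv i) (hfix i) (v := v) (w := w)
  refine ⟨fun i v => ⟨f i v, (hadj i).mpr rfl, fun w hw => ((hadj i).mp hw).symm⟩,
    fun v w hvw => ?_⟩
  -- `i ↦ f i v` injects the `2n - 1` matchings into the `2n - 1` vertices other than `v`
  let g : Fin (2 * n - 2 + 1) → {w // w ≠ v} := fun i => ⟨f i v, hfix i v⟩
  have hg : Bijective g := by
    rw [Fintype.bijective_iff_injective_and_card]
    refine ⟨fun i j h => hinj v (congrArg Subtype.val h), ?_⟩
    rw [Fintype.card_subtype_compl, Fintype.card_subtype_eq, Fintype.card_fin, Fintype.card_fin]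
    have := v.pos
    omega
  obtain ⟨i, hi⟩ := hg.2 ⟨w, hvw.symm⟩
  have hi : f i v = w := congrArg Subtype.val hi
  exact ⟨i, (hadj i).mpr hi, fun j hj => hinj v (((hadj j).mp hj).trans hi.symm)⟩

theorem hopSolvable_of_isAlternatingCycleCover {n t : ℕ} {l : Fin t → ℕ}
    (f : Fin (2 * n - 2 + 1) → Fin (2 * n) → Fin (2 * n)) (hinv : ∀ i, Involutive (f i))
    (hfix : ∀ i v, f i v ≠ v) (hinj : ∀ v, Injective (f · v))
    (C : Fin (2 * n - 2 + 1) → Fin t → List (Fin (2 * n)))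
    (hC : ∀ i, i ≠ 0 → IsAlternatingCycleCover (f 0) (f i) (C i))
    (hlen : ∀ i, i ≠ 0 → ∀ j, (C i j).Nodup ∧ (C i j).length = l j) :
    HOPSolvable n l := by
  refine ⟨fun i => involutionGraph (f i), isOneFactorization_involutionGraph f hinv hfix hinj,
    fun i hi => ?_⟩
  obtain ⟨e, he⟩ := (hC i hi).exists_equiv (hinv 0) (hfix 0) (hinv i) (hfix i)
  refine ⟨e.symm, fun c => ?_⟩
  obtain ⟨j, rfl⟩ := e.surjective c
  rw [he, Equiv.symm_apply_apply, ← (hlen i hi j).2, ← List.coe_toFinset, Set.ncard_coe_finset,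
    List.toFinset_card_of_nodup (hlen i hi j).1]

theorem HOPSolvable.of_equiv {n t t' : ℕ} {l : Fin t → ℕ} {l' : Fin t' → ℕ}
    (h : HOPSolvable n l) (e : Fin t ≃ Fin t') (hl : ∀ j, l' (e j) = l j) : HOPSolvable n l' := by
  obtain ⟨M, hM, hcomp⟩ := h
  refine ⟨M, hM, fun i hi => ?_⟩
  obtain ⟨e', he'⟩ := hcomp i hi
  exact ⟨e'.trans e, fun c => (he' c).trans (hl _).symm⟩

/-- Vertices are `0, …, 2 * parts.sum - 1`; `matchings[i]` is the table of the involution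
`v ↦ matchings[i][v]` of `M_i`, and `starts[i - 1][j]` is a vertex of the cycle of `M_0 ∪ M_i`
that is meant to have length `2 * parts[j]`. -/
structure HOPCertificate where
  parts : List ℕ
  matchings : List (List ℕ)
  starts : List (List ℕ)

namespace HOPCertificate

variable (c : HOPCertificate)

def vertex? (x : ℕ) : Option (Fin (2 * c.parts.sum)) := (List.finRange _)[x]?

/-- An entry that is not a vertex is read as `v` itself, which `Valid` rejects as a fixed point. -/
def matching (i : Fin (2 * c.parts.sum - 2 + 1)) (v : Fin (2 * c.parts.sum)) :
    Fin (2 * c.parts.sum) :=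
  (c.vertex? ((c.matchings.getD i []).getD v 0)).getD v

def cycle (i : Fin (2 * c.parts.sum - 2 + 1)) (j : Fin c.parts.length) :
    List (Fin (2 * c.parts.sum)) :=
  (c.vertex? ((c.starts.getD (i - 1 : ℕ) []).getD j 0)).elim []
    (alternatingWalk (c.matching 0) (c.matching i) (2 * c.parts[j]))

def Valid : Prop :=
  (∀ i v, c.matching i (c.matching i v) = v ∧ c.matching i v ≠ v) ∧
  (∀ v, Injective (c.matching · v)) ∧
  ∀ i, i ≠ 0 → IsAlternatingCycleCover (c.matching 0) (c.matching i) (c.cycle i) ∧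
    ∀ j, (c.cycle i j).Nodup ∧ (c.cycle i j).length = 2 * c.parts[j]

instance : DecidablePred Valid := fun c => by unfold Valid; infer_instance

theorem Valid.hopSolvable {c : HOPCertificate} (hc : c.Valid) :
    HOPSolvable c.parts.sum fun j : Fin c.parts.length => 2 * c.parts[j] :=
  hopSolvable_of_isAlternatingCycleCover c.matching (fun i v => (hc.1 i v).1)
    (fun i v => (hc.1 i v).2) hc.2.1 c.cycle (fun i hi => (hc.2.2 i hi).1)
    (fun i hi => (hc.2.2 i hi).2)

end HOPCertificate

-- One certificate for each partition of some `n ≤ 9` into parts `≥ 2`, the empty one included.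
def certificates : List HOPCertificate := [
  ⟨[], [], []⟩,
  ⟨[2],
    [[1, 0, 3, 2], [2, 3, 0, 1], [3, 2, 1, 0]],
    [[0], [0]]⟩,
  ⟨[3],
    [[1, 0, 3, 2, 5, 4], [3, 4, 5, 0, 1, 2], [5, 3, 4, 1, 2, 0], [2, 5, 0, 4, 3, 1], [4, 2, 1, 5, 0, 3]],
    [[0], [0], [0], [0]]⟩,
  ⟨[2, 2],
    [[1, 0, 3, 2, 5, 4, 7, 6], [3, 2, 1, 0, 7, 6, 5, 4], [5, 4, 6, 7, 1, 0, 2, 3], [6, 7, 4, 5, 2, 3, 0, 1], [7, 6, 5, 4, 3, 2, 1, 0], [4, 5, 7, 6, 0, 1, 3, 2], [2, 3, 0, 1, 6, 7, 4, 5]],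
    [[0, 4], [0, 2], [0, 2], [0, 2], [0, 2], [0, 4]]⟩,
  ⟨[4],
    [[1, 0, 3, 2, 5, 4, 7, 6], [4, 3, 7, 1, 0, 6, 5, 2], [5, 7, 6, 4, 3, 0, 2, 1], [2, 5, 0, 6, 7, 1, 3, 4], [3, 6, 4, 0, 2, 7, 1, 5], [6, 4, 5, 7, 1, 2, 0, 3], [7, 2, 1, 5, 6, 3, 4, 0]],
    [[0], [0], [0], [0], [0], [0]]⟩,
  ⟨[2, 3],
    [[1, 0, 3, 2, 5, 4, 7, 6, 9, 8], [6, 7, 9, 5, 8, 3, 0, 1, 4, 2], [8, 9, 5, 6, 7, 2, 3, 4, 0, 1], [2, 3, 0, 1, 9, 7, 8, 5, 6, 4], [3, 2, 1, 0, 6, 9, 4, 8, 7, 5], [4, 5, 8, 7, 0, 1, 9, 3, 2, 6], [9, 8, 7, 4, 3, 6, 5, 2, 1, 0], [7, 6, 4, 9, 2, 8, 1, 0, 5, 3], [5, 4, 6, 8, 1, 0, 2, 9, 3, 7]],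
    [[0, 2], [0, 2], [0, 4], [0, 4], [0, 2], [0, 2], [0, 2], [0, 2]]⟩,
  ⟨[5],
    [[1, 0, 3, 2, 5, 4, 7, 6, 9, 8], [4, 8, 9, 7, 0, 6, 5, 3, 1, 2], [6, 9, 8, 5, 7, 3, 0, 4, 2, 1], [7, 2, 1, 4, 3, 9, 8, 0, 6, 5], [8, 3, 4, 1, 2, 7, 9, 5, 0, 6], [9, 4, 5, 6, 1, 2, 3, 8, 7, 0], [3, 5, 6, 0, 8, 1, 2, 9, 4, 7], [5, 6, 7, 8, 9, 0, 1, 2, 3, 4], [2, 7, 0, 9, 6, 8, 4, 1, 5, 3]],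
    [[0], [0], [0], [0], [0], [0], [0], [0]]⟩,
  ⟨[2, 2, 2],
    [[1, 0, 3, 2, 5, 4, 7, 6, 9, 8, 11, 10], [9, 8, 4, 5, 2, 3, 10, 11, 1, 0, 6, 7], [7, 6, 9, 8, 11, 10, 1, 0, 3, 2, 5, 4], [10, 11, 6, 7, 9, 8, 2, 3, 5, 4, 0, 1], [6, 7, 5, 4, 3, 2, 0, 1, 11, 10, 9, 8], [3, 2, 1, 0, 8, 9, 11, 10, 4, 5, 7, 6], [5, 4, 11, 10, 1, 0, 9, 8, 7, 6, 3, 2], [8, 9, 10, 11, 6, 7, 4, 5, 0, 1, 2, 3], [4, 5, 7, 6, 0, 1, 3, 2, 10, 11, 8, 9], [2, 3, 0, 1, 10, 11, 8, 9, 6, 7, 4, 5], [11, 10, 8, 9, 7, 6, 5, 4, 2, 3, 1, 0]],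
    [[0, 2, 6], [0, 2, 4], [0, 2, 4], [0, 2, 8], [0, 4, 6], [0, 2, 6], [0, 2, 4], [0, 2, 8], [0, 4, 6], [0, 2, 4]]⟩,
  ⟨[2, 4],
    [[1, 0, 3, 2, 5, 4, 7, 6, 9, 8, 11, 10], [7, 11, 10, 6, 9, 8, 3, 0, 5, 4, 2, 1], [4, 6, 7, 5, 0, 3, 1, 2, 11, 10, 9, 8], [8, 4, 11, 10, 1, 6, 5, 9, 0, 7, 3, 2], [10, 5, 9, 8, 7, 1, 11, 4, 3, 2, 0, 6], [5, 8, 4, 9, 2, 0, 10, 11, 1, 3, 6, 7], [2, 9, 0, 7, 11, 10, 8, 3, 6, 1, 5, 4], [3, 7, 8, 0, 10, 11, 9, 1, 2, 6, 4, 5], [11, 3, 6, 1, 8, 9, 2, 10, 4, 5, 7, 0], [6, 10, 5, 4, 3, 2, 0, 8, 7, 11, 1, 9], [9, 2, 1, 11, 6, 7, 4, 5, 10, 0, 8, 3]],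
    [[4, 0], [8, 0], [2, 0], [2, 0], [6, 0], [4, 0], [4, 0], [4, 0], [2, 0], [4, 0]]⟩,
  ⟨[3, 3],
    [[1, 0, 3, 2, 5, 4, 7, 6, 9, 8, 11, 10], [9, 5, 7, 10, 8, 1, 11, 2, 4, 0, 3, 6], [7, 2, 1, 6, 9, 11, 3, 0, 10, 4, 8, 5], [11, 4, 8, 7, 1, 10, 9, 3, 2, 6, 5, 0], [6, 11, 9, 4, 3, 8, 0, 10, 5, 2, 7, 1], [10, 8, 6, 5, 7, 3, 2, 4, 1, 11, 0, 9], [3, 10, 11, 0, 6, 9, 4, 8, 7, 5, 1, 2], [8, 6, 5, 11, 10, 2, 1, 9, 0, 7, 4, 3], [5, 3, 4, 1, 2, 0, 8, 11, 6, 10, 9, 7], [4, 7, 10, 9, 0, 6, 5, 1, 11, 3, 2, 8], [2, 9, 0, 8, 11, 7, 10, 5, 3, 1, 6, 4]],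
    [[0, 2], [0, 4], [0, 2], [0, 2], [0, 2], [0, 4], [0, 2], [0, 6], [0, 2], [0, 4]]⟩,
  ⟨[6],
    [[1, 0, 3, 2, 5, 4, 7, 6, 9, 8, 11, 10], [9, 7, 5, 8, 11, 2, 10, 1, 3, 0, 6, 4], [5, 8, 6, 10, 7, 0, 2, 4, 1, 11, 3, 9], [3, 10, 9, 0, 8, 7, 11, 5, 4, 2, 1, 6], [7, 9, 11, 5, 6, 3, 4, 0, 10, 1, 8, 2], [11, 5, 8, 4, 3, 1, 9, 10, 2, 6, 7, 0], [10, 6, 4, 9, 2, 11, 1, 8, 7, 3, 0, 5], [2, 11, 0, 7, 10, 9, 8, 3, 6, 5, 4, 1], [6, 4, 7, 11, 1, 8, 0, 2, 5, 10, 9, 3], [4, 2, 1, 6, 0, 10, 3, 9, 11, 7, 5, 8], [8, 3, 10, 1, 9, 6, 5, 11, 0, 4, 2, 7]],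
    [[0], [0], [0], [0], [0], [0], [0], [0], [0], [0]]⟩,
  ⟨[2, 2, 3],
    [[1, 0, 3, 2, 5, 4, 7, 6, 9, 8, 11, 10, 13, 12], [5, 12, 8, 9, 13, 0, 10, 11, 2, 3, 6, 7, 1, 4], [13, 5, 7, 6, 12, 1, 3, 2, 11, 10, 9, 8, 4, 0], [8, 6, 13, 12, 10, 11, 1, 9, 0, 7, 4, 5, 3, 2], [10, 8, 5, 4, 3, 2, 12, 13, 1, 11, 0, 9, 6, 7], [7, 3, 6, 1, 11, 10, 2, 0, 13, 12, 5, 4, 9, 8], [12, 4, 9, 8, 1, 13, 11, 10, 3, 2, 7, 6, 0, 5], [9, 7, 4, 5, 2, 3, 8, 1, 6, 0, 13, 12, 11, 10], [2, 10, 0, 11, 8, 9, 13, 12, 4, 5, 1, 3, 7, 6], [6, 2, 1, 7, 9, 8, 0, 3, 5, 4, 12, 13, 10, 11], [11, 9, 12, 13, 6, 7, 4, 5, 10, 1, 8, 0, 2, 3], [4, 13, 11, 10, 0, 12, 9, 8, 7, 6, 3, 2, 5, 1], [3, 11, 10, 0, 7, 6, 5, 4, 12, 13, 2, 1, 8, 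9]],
    [[2, 6, 0], [2, 8, 0], [2, 4, 0], [2, 6, 0], [4, 8, 0], [2, 6, 0], [2, 10, 0], [4, 6, 0], [4, 10, 0], [2, 4, 0], [2, 6, 0], [4, 8, 0]]⟩,
  ⟨[2, 5],
    [[1, 0, 3, 2, 5, 4, 7, 6, 9, 8, 11, 10, 13, 12], [9, 2, 1, 4, 3, 11, 13, 12, 10, 0, 8, 5, 7, 6], [8, 11, 13, 9, 6, 7, 4, 5, 0, 3, 12, 1, 10, 2], [13, 10, 5, 12, 11, 2, 8, 9, 6, 7, 1, 4, 3, 0], [4, 7, 11, 10, 0, 12, 9, 1, 13, 6, 3, 2, 5, 8], [12, 5, 8, 13, 9, 1, 10, 11, 2, 4, 6, 7, 0, 3], [2, 8, 0, 11, 10, 9, 12, 13, 1, 5, 4, 3, 6, 7], [5, 13, 12, 6, 7, 0, 3, 4, 11, 10, 9, 8, 2, 1], [6, 9, 7, 5, 8, 3, 0, 2, 4, 1, 13, 12, 11, 10], [10, 4, 6, 7, 1, 8, 2, 3, 5, 12, 0, 13, 9, 11], [3, 6, 10, 0, 12, 13, 1, 8, 7, 11, 2, 9, 4, 5], [11, 3,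 4, 1, 2, 6, 5, 10, 12, 13, 7, 0, 8, 9], [7, 12, 9, 8, 13, 10, 11, 0, 3, 2, 5, 6, 1, 4]],
    [[6, 0], [4, 0], [6, 0], [2, 0], [6, 0], [6, 0], [8, 0], [10, 0], [2, 0], [4, 0], [8, 0], [2, 0]]⟩,
  ⟨[3, 4],
    [[1, 0, 3, 2, 5, 4, 7, 6, 9, 8, 11, 10, 13, 12], [8, 11, 5, 13, 12, 2, 9, 10, 0, 6, 7, 1, 4, 3], [2, 10, 0, 9, 13, 7, 12, 5, 11, 3, 1, 8, 6, 4], [12, 4, 8, 11, 1, 6, 5, 13, 2, 10, 9, 3, 0, 7], [6, 8, 4, 10, 2, 11, 0, 12, 1, 13, 3, 5, 7, 9], [11, 9, 12, 4, 3, 13, 10, 8, 7, 1, 6, 0, 2, 5], [9, 6, 10, 12, 7, 8, 1, 4, 5, 0, 2, 13, 3, 11], [5, 3, 9, 1, 8, 0, 13, 11, 4, 2, 12, 7, 10, 6], [3, 5, 7, 0, 6, 1, 4, 2, 12, 11, 13, 9, 8, 10], [7, 12, 13, 6, 11, 9, 3, 0, 10, 5, 8, 4, 1, 2], [4, 13,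 6, 8, 0, 10, 2, 9, 3, 7, 5, 12, 11, 1], [13, 7, 11, 5, 10, 3, 8, 1, 6, 12, 4, 2, 9, 0], [10, 2, 1, 7, 9, 12, 11, 3, 13, 4, 0, 6, 5, 8]],
    [[2, 0], [4, 0], [2, 0], [2, 0], [2, 0], [2, 0], [6, 0], [8, 0], [4, 0], [2, 0], [2, 0], [4, 0]]⟩,
  ⟨[7],
    [[1, 0, 3, 2, 5, 4, 7, 6, 9, 8, 11, 10, 13, 12], [13, 7, 10, 4, 3, 6, 5, 1, 11, 12, 2, 8, 9, 0], [12, 6, 11, 5, 13, 3, 1, 9, 10, 7, 8, 2, 0, 4], [4, 12, 9, 7, 0, 8, 10, 3, 5, 2, 6, 13, 1, 11], [8, 2, 1, 11, 6, 12, 4, 10, 0, 13, 7, 3, 5, 9], [2, 8, 0, 13, 10, 9, 11, 12, 1, 5, 4, 6, 7, 3], [7, 3, 13, 1, 12, 11, 8, 0, 6, 10, 9, 5, 4, 2], [10, 5, 8, 6, 9, 1, 3, 13, 2, 4, 0, 12, 11, 7], [9, 4, 6, 8, 1, 13, 2, 11, 3, 0, 12, 7, 10, 5], [6, 13, 4,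 12, 2, 10, 0, 8, 7, 11, 5, 9, 3, 1], [3, 10, 12, 0, 11, 7, 9, 5, 13, 6, 1, 4, 2, 8], [11, 9, 5, 10, 7, 2, 13, 4, 12, 1, 3, 0, 8, 6], [5, 11, 7, 9, 8, 0, 12, 2, 4, 3, 13, 1, 6, 10]],
    [[0], [0], [0], [0], [0], [0], [0], [0], [0], [0], [0], [0]]⟩,
  ⟨[2, 2, 2, 2],
    [[1, 0, 3, 2, 5, 4, 7, 6, 9, 8, 11, 10, 13, 12, 15, 14], [3, 2, 1, 0, 6, 7, 4, 5, 13, 12, 14, 15, 9, 8, 10, 11], [11, 10, 14, 15, 9, 8, 12, 13, 5, 4, 1, 0, 6, 7, 2, 3], [2, 3, 0, 1, 11, 10, 9, 8, 7, 6, 5, 4, 14, 15, 12, 13], [14, 15, 8, 9, 12, 13, 11, 10, 2, 3, 7, 6, 4, 5, 0, 1], [15, 14, 4, 5, 2, 3, 13, 12, 11, 10, 9, 8, 7, 6, 1, 0], [7, 6, 12, 13, 15, 14, 1, 0, 10, 11, 8, 9, 2, 3, 5, 4], [9, 8, 13, 12, 10, 11, 15, 14, 1, 0, 4, 5, 3,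 2, 7, 6], [13, 12, 15, 14, 8, 9, 10, 11, 4, 5, 6, 7, 1, 0, 3, 2], [6, 7, 10, 11, 13, 12, 0, 1, 15, 14, 2, 3, 5, 4, 9, 8], [4, 5, 7, 6, 0, 1, 3, 2, 12, 13, 15, 14, 8, 9, 11, 10], [10, 11, 5, 4, 3, 2, 8, 9, 6, 7, 0, 1, 15, 14, 13, 12], [8, 9, 6, 7, 14, 15, 2, 3, 0, 1, 13, 12, 11, 10, 4, 5], [12, 13, 11, 10, 7, 6, 5, 4, 14, 15, 3, 2, 0, 1, 8, 9], [5, 4, 9, 8, 1, 0, 14, 15, 3, 2, 12, 13, 10, 11, 6, 7]],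
    [[0, 4, 8, 10], [0, 2, 4, 6], [0, 4, 6, 12], [0, 2, 4, 6], [0, 2, 6, 8], [0, 2, 4, 8], [0, 2, 4, 6], [0, 2, 4, 6], [0, 2, 4, 8], [0, 2, 8, 10], [0, 2, 6, 12], [0, 2, 4, 10], [0, 2, 4, 8], [0, 2, 6, 10]]⟩,
  ⟨[2, 2, 4],
    [[1, 0, 3, 2, 5, 4, 7, 6, 9, 8, 11, 10, 13, 12, 15, 14], [6, 7, 14, 15, 10, 13, 0, 1, 12, 11, 4, 9, 8, 5, 2, 3], [3, 2, 1, 0, 11, 10, 13, 9, 14, 7, 5, 4, 15, 6, 8, 12], [8, 9, 7, 6, 13, 15, 3, 2, 0, 1, 12, 14, 10, 4, 11, 5], [2, 3, 0, 1, 9, 8, 12, 14, 5, 4, 15, 13, 6, 11, 7, 10], [5, 4, 6, 7, 1, 0, 2, 3, 11, 12, 14, 8, 9, 15, 10, 13], [15, 14, 8, 9, 12, 11, 10, 13, 2, 3, 6, 5, 4, 7, 1, 0], [13, 12, 4, 5, 2, 3, 14, 8, 7, 10, 9, 15, 1, 0, 6, 11], [11, 10, 9, 8, 15, 6, 5, 12,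 3, 2, 1, 0, 7, 14, 13, 4], [7, 6, 11, 10, 14, 12, 1, 0, 13, 15, 3, 2, 5, 8, 4, 9], [4, 5, 15, 14, 0, 1, 8, 10, 6, 13, 7, 12, 11, 9, 3, 2], [9, 8, 5, 4, 3, 2, 11, 15, 1, 0, 13, 6, 14, 10, 12, 7], [12, 13, 10, 11, 7, 14, 9, 4, 15, 6, 2, 3, 0, 1, 5, 8], [14, 15, 12, 13, 6, 9, 4, 11, 10, 5, 8, 7, 2, 3, 0, 1], [10, 11, 13, 12, 8, 7, 15, 5, 4, 14, 0, 1, 3, 2, 9, 6]],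
    [[0, 2, 4], [0, 4, 6], [0, 2, 4], [0, 4, 6], [0, 2, 8], [0, 2, 4], [0, 2, 6], [0, 2, 4], [0, 2, 4], [0, 2, 6], [0, 2, 6], [0, 2, 4], [0, 2, 4], [0, 2, 4]]⟩,
  ⟨[2, 3, 3],
    [[1, 0, 3, 2, 5, 4, 7, 6, 9, 8, 11, 10, 13, 12, 15, 14], [2, 3, 0, 1, 15, 10, 12, 8, 7, 13, 5, 14, 6, 9, 11, 4], [11, 10, 13, 4, 3, 12, 15, 9, 14, 7, 1, 0, 5, 2, 8, 6], [4, 5, 9, 7, 0, 1, 8, 3, 6, 2, 15, 12, 11, 14, 13, 10], [7, 6, 5, 10, 11, 2, 1, 0, 12, 14, 3, 4, 8, 15, 9, 13], [3, 2, 1, 0, 7, 8, 9, 4, 5, 6, 14, 13, 15, 11, 10, 12], [12, 13, 8, 11, 6, 14, 4, 15, 2, 10, 9, 3, 0, 1, 5, 7], [13, 12, 11, 6, 14, 9, 3, 10, 15, 5, 7, 2, 1, 0, 4, 8], [6, 7, 4, 14, 2, 15, 0, 1, 13, 11, 12, 9, 10, 8, 3, 5], [9, 8, 15, 13, 10, 6,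 5, 11, 1, 0, 4, 7, 14, 3, 12, 2], [15, 14, 10, 9, 12, 7, 13, 5, 11, 3, 2, 8, 4, 6, 1, 0], [8, 9, 12, 5, 13, 3, 10, 14, 0, 1, 6, 15, 2, 4, 7, 11], [14, 15, 6, 12, 9, 11, 2, 13, 10, 4, 8, 5, 3, 7, 0, 1], [10, 11, 7, 15, 8, 13, 14, 2, 4, 12, 0, 1, 9, 5, 6, 3], [5, 4, 14, 8, 1, 0, 11, 12, 3, 15, 13, 6, 7, 10, 2, 9]],
    [[0, 4, 6], [0, 2, 6], [0, 2, 10], [0, 2, 8], [0, 4, 10], [0, 2, 4], [0, 2, 4], [0, 2, 8], [0, 2, 4], [0, 2, 4], [0, 2, 6], [0, 2, 4], [0, 2, 4], [0, 2, 6]]⟩,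
  ⟨[2, 6],
    [[1, 0, 3, 2, 5, 4, 7, 6, 9, 8, 11, 10, 13, 12, 15, 14], [11, 6, 8, 4, 3, 7, 1, 5, 2, 10, 9, 0, 14, 15, 12, 13], [5, 15, 6, 13, 12, 0, 2, 14, 10, 11, 8, 9, 4, 3, 7, 1], [15, 13, 5, 14, 10, 2, 8, 9, 6, 7, 4, 12, 11, 1, 3, 0], [10, 7, 11, 5, 8, 3, 9, 1, 4, 6, 0, 2, 15, 14, 13, 12], [13, 14, 10, 11, 6, 8, 4, 12, 5, 15, 2, 3, 7, 0, 1, 9], [8, 5, 14, 15, 7, 1, 11, 4, 0, 12, 13, 6, 9, 10, 2, 3], [12, 2, 1, 9, 13, 10, 14, 15, 11, 3, 5, 8, 0, 4, 6, 7], [3, 4, 7, 0, 1, 9, 15, 2, 14, 5, 12, 13, 10, 11, 8, 6], [9, 3, 4, 1, 2, 13, 12, 8, 7, 0, 14, 15, 6, 5, 10, 11], [2, 8, 0, 12, 9, 6, 5, 13, 1, 4, 15, 14, 3, 7, 11, 10], [7, 10, 15, 6, 14, 11, 3, 0, 12, 13, 1, 5, 8, 9, 4, 2], [14, 12, 9,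 8, 11, 15, 13, 10, 3, 2, 7, 4, 1, 6, 0, 5], [6, 9, 12, 10, 15, 14, 0, 11, 13, 1, 3, 7, 2, 8, 5, 4], [4, 11, 13, 7, 0, 12, 10, 3, 15, 14, 6, 1, 5, 2, 9, 8]],
    [[12, 0], [8, 0], [6, 0], [12, 0], [2, 0], [2, 0], [6, 0], [10, 0], [10, 0], [10, 0], [8, 0], [2, 0], [4, 0], [8, 0]]⟩,
  ⟨[3, 5],
    [[1, 0, 3, 2, 5, 4, 7, 6, 9, 8, 11, 10, 13, 12, 15, 14], [8, 15, 12, 7, 14, 10, 13, 3, 0, 11, 5, 9, 2, 6, 4, 1], [7, 12, 15, 8, 13, 11, 10, 0, 3, 14, 6, 5, 1, 4, 9, 2], [3, 13, 11, 0, 8, 7, 9, 5, 4, 6, 15, 2, 14, 1, 12, 10], [12, 6, 5, 14, 15, 2, 1, 9, 11, 7, 13, 8, 0, 10, 3, 4], [13, 2, 1, 5, 11, 3, 14, 8, 7, 15, 12, 4, 10, 0, 6, 9], [9, 7, 10, 13, 6, 14, 4, 1, 15, 0, 2, 12, 11, 3, 5, 8], [15, 4, 6, 12, 1, 9, 2,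 13, 10, 5, 8, 14, 3, 7, 11, 0], [14, 3, 4, 1, 2, 13, 8, 11, 6, 10, 9, 7, 15, 5, 0, 12], [6, 8, 9, 15, 10, 12, 0, 14, 1, 2, 4, 13, 5, 11, 7, 3], [2, 14, 0, 6, 12, 8, 3, 10, 5, 13, 7, 15, 4, 9, 1, 11], [5, 10, 8, 11, 9, 0, 12, 15, 2, 4, 1, 3, 6, 14, 13, 7], [4, 11, 7, 10, 0, 6, 5, 2, 14, 12, 3, 1, 9, 15, 8, 13], [11, 5, 13, 9, 7, 1, 15, 4, 12, 3, 14, 0, 8, 2, 10, 6], [10, 9, 14, 4, 3, 15, 11, 12, 13, 1, 0, 6, 7, 8, 2, 5]],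
    [[2, 0], [2, 0], [4, 0], [2, 0], [6, 0], [2, 0], [2, 0], [6, 0], [4, 0], [4, 0], [6, 0], [8, 0], [2, 0], [2, 0]]⟩,
  ⟨[4, 4],
    [[1, 0, 3, 2, 5, 4, 7, 6, 9, 8, 11, 10, 13, 12, 15, 14], [7, 4, 12, 14, 1, 8, 9, 0, 5, 6, 13, 15, 2, 10, 3, 11], [8, 6, 14, 10, 9, 7, 1, 5, 0, 4, 3, 13, 15, 11, 2, 12], [9, 2, 1, 13, 15, 6, 5, 10, 12, 0, 7, 14, 8, 3, 11, 4], [3, 11, 15, 0, 6, 9, 4, 12, 13, 5, 14, 1, 7, 8, 10, 2], [6, 3, 5, 1, 7, 2, 0, 4, 15, 10, 9, 12, 11, 14, 13, 8], [2, 7, 0, 11, 8, 14, 10, 1, 4, 12, 6, 3, 9, 15, 5, 13], [4, 9, 8, 5, 0, 3, 13, 11, 2, 1, 15, 7, 14, 6, 12, 10], [11, 12, 9, 15, 10, 13, 14, 8, 7, 2, 4, 0, 1, 5, 6, 3], [14, 8, 11, 12, 13, 10, 15, 9, 1, 7, 5, 2, 3, 4, 0, 6], [10, 15, 7, 8, 14,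 11, 12, 2, 3, 13, 0, 5, 6, 9, 4, 1], [5, 13, 6, 9, 11, 0, 2, 15, 14, 3, 12, 4, 10, 1, 8, 7], [15, 10, 4, 6, 2, 12, 3, 13, 11, 14, 1, 8, 5, 7, 9, 0], [13, 14, 10, 7, 12, 15, 8, 3, 6, 11, 2, 9, 4, 0, 1, 5], [12, 5, 13, 4, 3, 1, 11, 14, 10, 15, 8, 6, 0, 2, 7, 9]],
    [[0, 2], [0, 2], [0, 4], [0, 4], [0, 8], [0, 4], [0, 6], [0, 2], [0, 2], [0, 2], [0, 2], [0, 2], [0, 2], [0, 6]]⟩,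
  ⟨[8],
    [[1, 0, 3, 2, 5, 4, 7, 6, 9, 8, 11, 10, 13, 12, 15, 14], [5, 14, 12, 8, 11, 0, 15, 13, 3, 10, 9, 4, 2, 7, 1, 6], [9, 5, 13, 11, 14, 1, 8, 12, 6, 0, 15, 3, 7, 2, 4, 10], [10, 4, 15, 9, 1, 7, 13, 5, 12, 3, 0, 14, 8, 6, 11, 2], [6, 12, 5, 10, 15, 2, 0, 9, 11, 7, 3, 8, 1, 14, 13, 4], [2, 11, 0, 13, 7, 9, 14, 4, 10, 5, 8, 1, 15, 3, 6, 12], [14, 6, 10, 15, 12, 11, 1, 8, 7, 13, 2, 5, 4, 9, 0, 3], [13, 2, 1, 5, 8, 3, 11, 15, 4, 14, 12, 6, 10, 0, 9, 7], [8, 3, 14, 1, 13, 15, 9, 10, 0, 6, 7, 12, 11, 4, 2, 5], [11, 7, 9, 4, 3, 6, 5, 1, 15, 2, 13, 0, 14, 10, 12, 8], [4, 13, 8, 7, 0, 14, 10, 3, 2, 12, 6, 15, 9, 1, 5, 11], [3, 10, 4, 0, 2, 8, 12, 14, 5, 15, 1, 13, 6, 11, 7, 9], [12, 15, 7, 14,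 6, 10, 4, 2, 13, 11, 5, 9, 0, 8, 3, 1], [7, 9, 11, 6, 10, 12, 3, 0, 14, 1, 4, 2, 5, 15, 8, 13], [15, 8, 6, 12, 9, 13, 2, 11, 1, 4, 14, 7, 3, 5, 10, 0]],
    [[0], [0], [0], [0], [0], [0], [0], [0], [0], [0], [0], [0], [0], [0]]⟩,
  ⟨[2, 2, 2, 3],
    [[1, 0, 3, 2, 5, 4, 7, 6, 9, 8, 11, 10, 13, 12, 15, 14, 17, 16], [2, 3, 0, 1, 13, 12, 11, 10, 15, 17, 7, 6, 5, 4, 16, 8, 14, 9], [16, 17, 7, 6, 15, 14, 3, 2, 11, 13, 12, 8, 10, 9, 5, 4, 0, 1], [12, 13, 16, 17, 8, 9, 10, 14, 4, 5, 6, 15, 0, 1, 7, 11, 2, 3], [5, 4, 8, 9, 1, 0, 16, 17, 2, 3, 13, 14, 15, 10, 11, 12, 6, 7], [8, 9, 15, 14, 6, 7, 4, 5, 0, 1, 17, 12, 11, 16, 3, 2, 13, 10], [17, 16, 5, 4, 3, 2, 13, 12, 14, 11, 15, 9, 7, 6, 8, 10, 1, 0], [3, 2, 1, 0, 12, 13,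 8, 9, 6, 7, 14, 17, 4, 5, 10, 16, 15, 11], [6, 7, 13, 12, 10, 11, 0, 1, 16, 14, 4, 5, 3, 2, 9, 17, 8, 15], [13, 12, 9, 8, 14, 15, 17, 11, 3, 2, 16, 7, 1, 0, 4, 5, 10, 6], [9, 8, 11, 10, 16, 17, 15, 13, 1, 0, 3, 2, 14, 7, 12, 6, 4, 5], [7, 6, 17, 16, 11, 10, 1, 0, 12, 15, 5, 4, 8, 14, 13, 9, 3, 2], [10, 11, 14, 15, 9, 8, 12, 16, 5, 4, 0, 1, 6, 17, 2, 3, 7, 13], [11, 10, 4, 5, 2, 3, 14, 15, 13, 16, 1, 0, 17, 8, 6, 7, 9, 12], [15, 14, 6, 7, 17, 16, 2, 3, 10, 12, 8, 13, 9, 11, 1, 0, 5, 4], [14, 15, 12, 13, 7, 6, 5, 4, 17, 10, 9, 16, 2, 3, 0, 1, 11, 8], [4, 5, 10, 11, 0, 1, 9, 8, 7, 6, 2, 3, 16, 15, 17, 13, 12, 14]],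
    [[0, 4, 6, 8], [0, 2, 4, 8], [0, 2, 4, 6], [0, 2, 6, 10], [0, 2, 4, 10], [0, 2, 6, 8], [0, 4, 6, 10], [0, 2, 4, 8], [0, 2, 4, 6], [0, 2, 4, 6], [0, 2, 4, 8], [0, 2, 4, 6], [0, 2, 6, 8], [0, 2, 4, 8], [0, 2, 4, 8], [0, 2, 6, 12]]⟩,
  ⟨[2, 2, 5],
    [[1, 0, 3, 2, 5, 4, 7, 6, 9, 8, 11, 10, 13, 12, 15, 14, 17, 16], [13, 12, 5, 4, 3, 2, 11, 8, 7, 16, 14, 6, 1, 0, 10, 17, 9, 15], [15, 14, 9, 8, 16, 13, 17, 11, 3, 2, 12, 7, 10, 5, 1, 0, 4, 6], [4, 5, 11, 10, 0, 1, 14, 13, 15, 17, 3, 2, 16, 7, 6, 8, 12, 9], [16, 17, 6, 7, 12, 8, 2, 3, 5, 15, 13, 14, 4, 10, 11, 9, 0, 1], [9, 8, 16, 17, 10, 7, 12, 5, 1, 0, 4, 15, 6, 14, 13, 11, 2, 3], [10, 11, 14, 15, 7, 12, 9, 4, 16, 6, 0, 1, 5, 17, 2, 3, 8, 13], [12, 13,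 7, 6, 14, 11, 3, 2, 17, 10, 9, 5, 0, 1, 4, 16, 15, 8], [11, 10, 15, 14, 9, 6, 5, 16, 13, 4, 1, 0, 17, 8, 3, 2, 7, 12], [2, 3, 0, 1, 17, 16, 10, 15, 11, 13, 6, 8, 14, 9, 12, 7, 5, 4], [17, 16, 10, 11, 13, 15, 8, 12, 6, 14, 2, 3, 7, 4, 9, 5, 1, 0], [3, 2, 1, 0, 8, 9, 13, 17, 4, 5, 15, 12, 11, 6, 16, 10, 14, 7], [8, 9, 12, 13, 15, 10, 16, 14, 0, 1, 5, 17, 2, 3, 7, 4, 6, 11], [14, 15, 13, 12, 6, 17, 4, 9, 10, 7, 8, 16, 3, 2, 0, 1, 11, 5], [5, 4, 17, 16, 1, 0, 15, 10, 14, 12, 7, 13, 9, 11, 8, 6, 3, 2], [7, 6, 8, 9, 11, 14, 1, 0, 2, 3, 17, 4, 15, 16, 5, 12, 13, 10], [6, 7, 4, 5, 2, 3, 0, 1, 12, 11, 16, 9, 8, 15, 17, 13, 10, 14]],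
    [[0, 2, 6], [0, 2, 4], [0, 2, 6], [0, 2, 4], [0, 2, 4], [0, 2, 4], [0, 2, 4], [0, 2, 4], [0, 4, 6], [0, 2, 4], [0, 4, 6], [0, 2, 4], [0, 2, 4], [0, 2, 6], [0, 2, 4], [0, 2, 8]]⟩,
  ⟨[2, 3, 4],
    [[1, 0, 3, 2, 5, 4, 7, 6, 9, 8, 11, 10, 13, 12, 15, 14, 17, 16], [5, 4, 7, 17, 1, 0, 16, 2, 15, 12, 14, 13, 9, 11, 10, 8, 6, 3], [10, 11, 16, 5, 17, 3, 14, 9, 12, 7, 0, 1, 8, 15, 6, 13, 2, 4], [16, 17, 8, 4, 3, 9, 13, 10, 2, 5, 7, 14, 15, 6, 11, 12, 0, 1], [6, 7, 5, 15, 14, 2, 0, 1, 13, 10, 9, 16, 17, 8, 4, 3, 11, 12], [11, 10, 4, 12, 2, 13, 8, 15, 6, 17, 1, 0, 3, 5, 16, 7, 14, 9], [2, 3, 0, 1, 7, 14, 15, 4, 17, 13, 16, 12, 11, 9, 5, 6, 10, 8], [3, 2, 1, 0, 6, 10, 4, 11, 16, 15, 5, 7, 14, 17, 12, 9, 8, 13],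 [7, 6, 10, 8, 15, 17, 1, 0, 3, 11, 2, 9, 16, 14, 13, 4, 12, 5], [12, 13, 11, 9, 16, 15, 17, 14, 10, 3, 8, 2, 0, 1, 7, 5, 4, 6], [15, 14, 6, 13, 9, 16, 2, 12, 11, 4, 17, 8, 7, 3, 1, 0, 5, 10], [13, 12, 14, 10, 8, 6, 5, 17, 4, 16, 3, 15, 1, 0, 2, 11, 9, 7], [14, 15, 9, 6, 10, 12, 3, 8, 7, 2, 4, 17, 5, 16, 0, 1, 13, 11], [8, 9, 17, 14, 12, 11, 10, 13, 0, 1, 6, 5, 4, 7, 3, 16, 15, 2], [4, 5, 12, 11, 0, 1, 9, 16, 14, 6, 13, 3, 2, 10, 8, 17, 7, 15], [17, 16, 13, 7, 11, 8, 12, 3, 5, 14, 15, 4, 6, 2, 9, 10, 1, 0], [9, 8, 15, 16, 13, 7, 11, 5, 1, 0, 12, 6, 10, 4, 17, 2, 3, 14]],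
    [[0, 2, 8], [0, 2, 6], [0, 2, 6], [0, 2, 8], [0, 2, 6], [0, 4, 8], [0, 4, 8], [0, 2, 4], [0, 2, 4], [0, 2, 4], [0, 2, 4], [0, 2, 4], [0, 2, 4], [0, 2, 6], [0, 2, 4], [0, 2, 4]]⟩,
  ⟨[2, 7],
    [[1, 0, 3, 2, 5, 4, 7, 6, 9, 8, 11, 10, 13, 12, 15, 14, 17, 16], [7, 17, 9, 15, 8, 16, 14, 0, 4, 2, 12, 13, 10, 11, 6, 3, 5, 1], [6, 8, 15, 17, 12, 13, 0, 14, 1, 10, 9, 16, 4, 5, 7, 2, 11, 3], [10, 14, 16, 9, 13, 12, 8, 11, 6, 3, 0, 7, 5, 4, 1, 17, 2, 15], [16, 4, 8, 5, 1, 3, 13, 12, 2, 11, 15, 9, 7, 6, 17, 10, 0, 14], [15, 6, 12, 13, 16, 7, 1, 5, 11, 14, 17, 8, 2, 3, 9, 0, 4, 10], [13, 10, 7, 14, 9, 8, 11, 2, 5, 4, 1, 6, 17, 0, 3, 16, 15, 12], [14, 9, 6, 7, 10, 15, 2, 3, 17, 1, 4, 12, 11, 16, 0, 5, 13, 8], [9,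 15, 5, 8, 7, 2, 12, 4, 3, 0, 16, 17, 6, 14, 13, 1, 10, 11], [12, 7, 4, 6, 2, 17, 3, 1, 16, 13, 14, 15, 0, 9, 10, 11, 8, 5], [4, 12, 17, 16, 0, 10, 15, 9, 13, 7, 5, 14, 1, 8, 11, 6, 3, 2], [3, 16, 11, 0, 15, 14, 10, 8, 7, 12, 6, 2, 9, 17, 5, 4, 1, 13], [8, 3, 14, 1, 11, 9, 17, 16, 0, 5, 13, 4, 15, 10, 2, 12, 7, 6], [2, 11, 0, 4, 3, 6, 5, 17, 10, 16, 8, 1, 14, 15, 12, 13, 9, 7], [11, 5, 13, 12, 17, 1, 9, 10, 15, 6, 7, 0, 3, 2, 16, 8, 14, 4], [5, 13, 10, 11, 14, 0, 16, 15, 12, 17, 2, 3, 8, 1, 4, 7, 6, 9], [17, 2, 1, 10, 6, 11, 4, 13, 14, 15, 3, 5, 16, 7, 8, 9, 12, 0]],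
    [[10, 0], [4, 0], [4, 0], [6, 0], [2, 0], [4, 0], [2, 0], [10, 0], [10, 0], [2, 0], [4, 0], [6, 0], [12, 0], [2, 0], [2, 0], [8, 0]]⟩,
  ⟨[3, 3, 3],
    [[1, 0, 3, 2, 5, 4, 7, 6, 9, 8, 11, 10, 13, 12, 15, 14, 17, 16], [7, 17, 14, 12, 9, 11, 16, 0, 10, 4, 8, 5, 3, 15, 2, 13, 6, 1], [12, 15, 11, 4, 3, 10, 8, 16, 6, 17, 5, 2, 0, 14, 13, 1, 7, 9], [16, 3, 17, 1, 10, 13, 15, 9, 14, 7, 4, 12, 11, 5, 8, 6, 0, 2], [14, 4, 13, 6, 1, 15, 3, 12, 11, 16, 17, 8, 7, 2, 0, 5, 9, 10], [5, 9, 6, 11, 8, 0, 2, 10, 4, 1, 7, 3, 15, 16, 17, 12, 13, 14], [9, 12, 7, 10, 17, 14, 11, 2, 13, 0, 3, 6, 1, 8, 5, 16, 15, 4], [3, 5, 4, 0, 2, 1, 14, 8, 7, 15, 16, 13, 17, 11, 6, 9, 10, 12], [10, 6, 15, 17, 13, 9, 1, 11, 12, 5, 0, 7, 8, 4, 16, 2,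 14, 3], [2, 8, 0, 9, 7, 16, 17, 4, 1, 3, 13, 15, 14, 10, 12, 11, 5, 6], [6, 2, 1, 7, 15, 8, 0, 3, 5, 14, 12, 16, 10, 17, 9, 4, 11, 13], [8, 10, 16, 14, 12, 7, 13, 5, 0, 11, 1, 9, 4, 6, 3, 17, 2, 15], [11, 14, 8, 13, 16, 6, 5, 17, 2, 12, 15, 0, 9, 3, 1, 10, 4, 7], [15, 11, 9, 16, 6, 12, 4, 13, 17, 2, 14, 1, 5, 7, 10, 0, 3, 8], [13, 7, 5, 15, 14, 2, 12, 1, 16, 10, 9, 17, 6, 0, 4, 3, 8, 11], [17, 13, 10, 5, 11, 3, 9, 14, 15, 6, 2, 4, 16, 1, 7, 8, 12, 0], [4, 16, 12, 8, 0, 17, 10, 15, 3, 13, 6, 14, 2, 9, 11, 7, 1, 5]],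
    [[0, 2, 4], [0, 2, 6], [0, 4, 6], [0, 2, 8], [0, 2, 12], [0, 2, 4], [0, 6, 10], [0, 2, 4], [0, 4, 10], [0, 4, 10], [0, 2, 4], [0, 2, 4], [0, 2, 4], [0, 2, 8], [0, 2, 6], [0, 2, 6]]⟩,
  ⟨[3, 6],
    [[1, 0, 3, 2, 5, 4, 7, 6, 9, 8, 11, 10, 13, 12, 15, 14, 17, 16], [13, 7, 10, 12, 11, 6, 5, 1, 17, 15, 2, 4, 3, 0, 16, 9, 14, 8], [4, 16, 8, 7, 0, 9, 17, 3, 2, 5, 15, 12, 11, 14, 13, 10, 1, 6], [11, 9, 6, 14, 13, 16, 2, 15, 12, 1, 17, 0, 8, 4, 3, 7, 5, 10], [14, 17, 4, 13, 2, 12, 8, 10, 6, 16, 7, 15, 5, 3, 0, 11, 9, 1], [3, 13, 9, 0, 16, 14, 11, 8, 7, 2, 12, 6, 10, 1, 5, 17, 4, 15], [7, 15, 16, 5, 17, 3, 12, 0, 14, 10, 9, 13, 6, 11, 8, 1, 2, 4], [6, 8, 5, 16, 7, 2, 0, 4, 1, 17, 13, 14, 15, 10, 11, 12, 3, 9], [8,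 12, 14, 4, 3, 15, 13, 17, 0, 11, 16, 9, 1, 6, 2, 5, 10, 7], [15, 6, 13, 17, 10, 7, 1, 5, 11, 14, 4, 8, 16, 2, 9, 0, 12, 3], [5, 14, 15, 10, 6, 0, 4, 11, 16, 13, 3, 7, 17, 9, 1, 2, 8, 12], [2, 11, 0, 9, 15, 8, 16, 12, 5, 3, 14, 1, 7, 17, 10, 4, 6, 13], [12, 4, 7, 8, 1, 10, 9, 2, 3, 6, 5, 16, 0, 15, 17, 13, 11, 14], [10, 3, 17, 1, 12, 11, 14, 9, 15, 7, 0, 5, 4, 16, 6, 8, 13, 2], [16, 2, 1, 11, 9, 17, 15, 13, 10, 4, 8, 3, 14, 7, 12, 6, 0, 5], [9, 5, 12, 15, 14, 1, 10, 16, 13, 0, 6, 17, 2, 8, 4, 3, 7, 11], [17, 10, 11, 6, 8, 13, 3, 14, 4, 12, 1, 2, 9, 5, 7, 16, 15, 0]],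
    [[8, 0], [10, 0], [2, 0], [2, 0], [4, 0], [2, 0], [10, 0], [2, 0], [2, 0], [8, 0], [6, 0], [2, 0], [6, 0], [6, 0], [6, 0], [4, 0]]⟩,
  ⟨[4, 5],
    [[1, 0, 3, 2, 5, 4, 7, 6, 9, 8, 11, 10, 13, 12, 15, 14, 17, 16], [3, 9, 4, 0, 2, 13, 15, 16, 12, 1, 17, 14, 8, 5, 11, 6, 7, 10], [11, 15, 8, 4, 3, 16, 13, 14, 2, 17, 12, 0, 10, 6, 7, 1, 5, 9], [4, 2, 1, 8, 0, 10, 14, 12, 3, 11, 5, 9, 7, 17, 6, 16, 15, 13], [14, 8, 10, 13, 15, 7, 9, 5, 1, 6, 2, 16, 17, 3, 0, 4, 11, 12], [2, 10, 0, 7, 9, 14, 12, 3, 16, 4, 1, 13, 6, 11, 5, 17, 8, 15], [7, 13, 14, 16, 12, 11, 10, 0, 17, 15, 6, 5, 4, 1, 2, 9, 3, 8], [12, 5, 9, 15, 7, 1, 17, 4, 11, 2, 14, 8, 0, 16, 10, 3, 13, 6], [13, 6, 15, 5, 16, 3, 1, 11, 10, 12, 8, 7, 9, 0, 17, 2, 4,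 14], [16, 3, 7, 1, 6, 17, 4, 2, 15, 10, 9, 12, 11, 14, 13, 8, 0, 5], [10, 4, 13, 6, 1, 9, 3, 17, 14, 5, 0, 15, 16, 2, 8, 11, 12, 7], [6, 14, 16, 12, 8, 15, 0, 9, 4, 7, 13, 17, 3, 10, 1, 5, 2, 11], [15, 11, 6, 14, 17, 12, 2, 10, 13, 16, 7, 1, 5, 8, 3, 0, 9, 4], [17, 12, 5, 11, 14, 2, 16, 8, 7, 13, 15, 3, 1, 9, 4, 10, 6, 0], [5, 16, 17, 10, 11, 0, 8, 13, 6, 14, 3, 4, 15, 7, 9, 12, 1, 2], [9, 7, 12, 17, 10, 8, 11, 1, 5, 0, 4, 6, 2, 15, 16, 13, 14, 3], [8, 17, 11, 9, 13, 6, 5, 15, 0, 3, 16, 2, 14, 4, 12, 7, 10, 1]],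
    [[6, 0], [2, 0], [6, 0], [2, 0], [4, 0], [2, 0], [2, 0], [2, 0], [8, 0], [2, 0], [2, 0], [4, 0], [2, 0], [6, 0], [2, 0], [4, 0]]⟩,
  ⟨[9],
    [[1, 0, 3, 2, 5, 4, 7, 6, 9, 8, 11, 10, 13, 12, 15, 14, 17, 16], [17, 6, 12, 15, 11, 7, 1, 5, 14, 10, 9, 4, 2, 16, 8, 3, 13, 0], [10, 15, 5, 7, 12, 2, 9, 3, 17, 6, 0, 13, 4, 11, 16, 1, 14, 8], [12, 3, 8, 1, 16, 15, 10, 14, 2, 11, 6, 9, 0, 17, 7, 5, 4, 13], [15, 11, 14, 4, 3, 6, 5, 8, 7, 16, 13, 1, 17, 10, 2, 0, 9, 12], [11, 14, 13, 16, 15, 8, 17, 9, 5, 7, 12, 0, 10, 2, 1, 4, 3, 6], [16, 13, 9, 5, 6, 3, 4, 11, 15, 2, 17, 7, 14, 1, 12, 8, 0, 10], [5, 2, 1, 14, 9, 0, 8, 10, 6, 4, 7, 17, 16, 15, 3, 13, 12, 11], [4, 12, 17, 13, 0, 9, 16, 15, 10, 5, 8, 14, 1, 3, 11, 7, 6, 2],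 [3, 17, 4, 0, 2, 14, 11, 12, 13, 15, 16, 6, 7, 8, 5, 9, 10, 1], [6, 4, 15, 10, 1, 16, 0, 13, 11, 12, 3, 8, 9, 7, 17, 2, 5, 14], [13, 16, 7, 12, 8, 11, 15, 2, 4, 17, 14, 5, 3, 0, 10, 6, 1, 9], [2, 8, 0, 17, 7, 10, 14, 4, 1, 13, 5, 12, 11, 9, 6, 16, 15, 3], [7, 10, 11, 9, 14, 12, 13, 0, 16, 3, 1, 2, 5, 6, 4, 17, 8, 15], [8, 7, 10, 6, 13, 17, 3, 1, 0, 14, 2, 16, 15, 4, 9, 12, 11, 5], [9, 5, 6, 11, 17, 1, 2, 16, 12, 0, 15, 3, 8, 14, 13, 10, 7, 4], [14, 9, 16, 8, 10, 13, 12, 17, 3, 1, 4, 15, 6, 5, 0, 11, 2, 7]],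
    [[0], [0], [0], [0], [0], [0], [0], [0], [0], [0], [0], [0], [0], [0], [0], [0]]⟩]

theorem certificates_valid : ∀ c ∈ certificates, c.Valid := by
  decide +kernel

theorem cons_mem_map_parts_certificates :
    ∀ L ∈ certificates.map HOPCertificate.parts, ∀ a < 10, 2 ≤ a → (∀ x ∈ L, a ≤ x) →
      a + L.sum ≤ 9 → a :: L ∈ certificates.map HOPCertificate.parts := by
  decide

theorem mem_map_parts_certificates {L : List ℕ} (hL : L.SortedLE) (h2 : ∀ x ∈ L, 2 ≤ x)
    (h9 : L.sum ≤ 9) : L ∈ certificates.map HOPCertificate.parts := by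
  induction L with
  | nil => decide
  | cons a L ih =>
    rw [List.sortedLE_iff_pairwise, List.pairwise_cons] at hL
    rw [List.sum_cons] at h9
    refine cons_mem_map_parts_certificates L
      (ih hL.2.sortedLE (fun x hx => h2 x (List.mem_cons_of_mem a hx)) (by omega))
      a (by omega) (h2 a List.mem_cons_self) hL.1 h9

theorem hop_solvable_of_le_nine_general (t : ℕ) (m : Fin t → ℕ)
    (hm : ∀ i, 2 ≤ m i) (n : ℕ) (hn : ∑ i, m i = n) (hn9 : n ≤ 9) :
    HOPSolvable n (fun i => 2 * m i) := by
  set σ := Tuple.sort m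
  set L := List.ofFn (m ∘ σ)
  have hsum : L.sum = n := by
    rw [List.sum_ofFn]
    exact (Equiv.sum_comp σ m).trans hn
  have hmem : L ∈ certificates.map HOPCertificate.parts :=
    mem_map_parts_certificates (Tuple.monotone_sort m).sortedLE_ofFn (by simp [L, hm])
      (hsum ▸ hn9)
  obtain ⟨⟨parts, matchings, starts⟩, hc, rfl : parts = L⟩ := List.mem_map.mp hmem
  have hsol := (certificates_valid _ hc).hopSolvable
  rw [hsum] at hsol
  exact hsol.of_equiv ((finCongr (List.length_ofFn)).trans σ) fun j => by simp [L]; rfl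

theorem hop_solvable_of_le_nine (t : ℕ) (ht : 1 ≤ t) (m : Fin t → ℕ)
    (hm : ∀ i, 2 ≤ m i) (n : ℕ) (hn : ∑ i, m i = n) (hn9 : n ≤ 9) :
    HOPSolvable n (fun i => 2 * m i) :=
  hop_solvable_of_le_nine_general t m hm n hn hn9
end

section
/- For all integers t ≥ 1 and m_1, …, m_t with each m_i ≥ 2 and m_1 + ⋯ + m_t = 11, the Honeymoon Oberwolfach Problem HOP(2m_1, …, 2m_t) has a solution; that is, the complete graph K_{22} admits a semi-uniform 1-factorization of type (2m_1, …, 2m_t). -/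
open SimpleGraph

set_option maxRecDepth 20000
set_option exponentiation.threshold 5000
set_option maxHeartbeats 2000000
set_option linter.unnecessarySeqFocus false

namespace HOPAux

/-- components lemma -/
lemma components_card {N t : ℕ} (G : SimpleGraph (Fin N))
    (rep : Fin N → Fin t) (b : Fin t → Fin N) (l : Fin t → ℕ)
    (hadj : ∀ v w, G.Adj v w → rep v = rep w)
    (hb : ∀ j, rep (b j) = j)
    (hreach : ∀ v, G.Reachable (b (rep v)) v)
    (hcard : ∀ j : Fin t, (Finset.univ.filter (fun v => rep v = j)).card = l j) :
    ∃ e : G.ConnectedComponent ≃ Fin t,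
      ∀ c : G.ConnectedComponent, c.supp.ncard = l (e c) := by
  classical
  have hwalk : ∀ (v w : Fin N) (p : G.Walk v w), rep v = rep w := by
    intro v w p
    induction p with
    | nil => rfl
    | cons h _ ih => exact (hadj _ _ h).trans ih
  let f : G.ConnectedComponent → Fin t :=
    ConnectedComponent.lift rep (fun v w p _ => hwalk v w p)
  have hmk : ∀ v, f (G.connectedComponentMk v) = rep v := fun _ => rfl
  have hleft : ∀ c, G.connectedComponentMk (b (f c)) = c := by
    refine ConnectedComponent.ind (fun v => ?_)
    exact ConnectedComponent.sound (hreach v)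
  let e : G.ConnectedComponent ≃ Fin t :=
    { toFun := f
      invFun := fun j => G.connectedComponentMk (b j)
      left_inv := fun c => hleft c
      right_inv := fun j => by simpa [hmk] using hb j }
  refine ⟨e, ?_⟩
  refine ConnectedComponent.ind (fun v => ?_)
  have hsupp : (G.connectedComponentMk v).supp = {w | rep w = rep v} := by
    ext w
    simp only [ConnectedComponent.mem_supp_iff, Set.mem_setOf_eq]
    constructor
    · intro h
      have := congrArg f h
      simpa [hmk] using this
    · intro h
      have h1 : G.connectedComponentMk (b (rep w)) = G.connectedComponentMk w :=
        hleft (G.connectedComponentMk w)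
      have h2 : G.connectedComponentMk (b (rep v)) = G.connectedComponentMk v :=
        hleft (G.connectedComponentMk v)
      rw [← h1, h, h2]
  rw [hsupp]
  have hn : {w | rep w = rep v}.ncard
      = (Finset.univ.filter (fun w => rep w = rep v)).card := by
    rw [Set.ncard_eq_toFinset_card']
    congr 1
    simp [Set.toFinset_setOf]
  rw [hn, hcard]
  rfl

lemma reach_of_iterate {N : ℕ} (G : SimpleGraph (Fin N)) (p q : Fin N → Fin N)
    (hp : ∀ v, G.Adj v (p v)) (hq : ∀ v, G.Adj v (q v)) (x v : Fin N) (k : ℕ)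
    (h : (fun y => q (p y))^[k] x = v ∨ p ((fun y => q (p y))^[k] x) = v) :
    G.Reachable x v := by
  have key : ∀ k : ℕ, G.Reachable x ((fun y => q (p y))^[k] x) := by
    intro k
    induction k with
    | zero => exact Reachable.refl x
    | succ k ih =>
      rw [Function.iterate_succ_apply']
      exact ih.trans ((hp _).reachable.trans (hq _).reachable)
  rcases h with h | h
  · exact h ▸ key k
  · exact h ▸ ((key k).trans (hp _).reachable)


def lk (a k : ℕ) : ℕ := a / 32 ^ k % 32

def mkF (n a k : ℕ) (hn : 0 < n) : Fin n := ⟨lk a k % n, Nat.mod_lt _ hn⟩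

def tT (a : ℕ) : Fin 21 → Fin 22 → Fin 22 := fun i v =>
  mkF 22 a (22 * i.val + v.val) (by norm_num)

def tJ (a : ℕ) : Fin 22 → Fin 22 → Fin 21 := fun v w =>
  mkF 21 a (22 * v.val + w.val) (by norm_num)

def tR (t a : ℕ) (ht : 0 < t) : Fin 21 → Fin 22 → Fin t := fun i v =>
  mkF t a (22 * i.val + v.val) ht

def tB (t a : ℕ) : Fin 21 → Fin t → Fin 22 := fun i j =>
  mkF 22 a (t * i.val + j.val) (by norm_num)

def mkM (T : Fin 21 → Fin 22 → Fin 22) (i : Fin 21) : SimpleGraph (Fin 22) :=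
  SimpleGraph.fromRel (fun v w => T i v = w)

instance mkM.adjDecidable (T : Fin 21 → Fin 22 → Fin 22) (i : Fin 21) :
    DecidableRel (mkM T i).Adj := fun v w =>
  decidable_of_iff _ (SimpleGraph.fromRel_adj _ v w).symm

lemma oneFact (T : Fin 21 → Fin 22 → Fin 22) (J : Fin 22 → Fin 22 → Fin 21)
    (hA : ∀ i v, T i (T i v) = v) (hB : ∀ i v, T i v ≠ v)
    (hJ : ∀ (i : Fin 21) (v : Fin 22), J v (T i v) = i) :
    IsOneFactorization 11 (mkM T) := by
  have hC : ∀ (v : Fin 22) (i j : Fin 21), T i v = T j v → i = j := by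
    intro v i j h
    rw [← hJ i v, h, hJ j v]
  constructor
  · intro i v
    refine ⟨T i v, ⟨(hB i v).symm, Or.inl rfl⟩, ?_⟩
    rintro w ⟨hne, h | h⟩
    · exact h.symm
    · rw [← h, hA]
  · intro v w hvw
    have hinj : Function.Injective
        (fun i : Fin 21 => (⟨T i v, hB i v⟩ : {x : Fin 22 // x ≠ v})) := by
      intro i j hij
      exact hC v i j (congrArg Subtype.val hij)
    have hcard : Fintype.card {x : Fin 22 // x ≠ v} = 21 := by
      simp [Fintype.card_subtype_compl]
    have hbij : Function.Bijective
        (fun i : Fin 21 => (⟨T i v, hB i v⟩ : {x : Fin 22 // x ≠ v})) := by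
      rw [Fintype.bijective_iff_injective_and_card]
      exact ⟨hinj, by simp [hcard]⟩
    obtain ⟨i, hi⟩ := hbij.surjective ⟨w, hvw.symm⟩
    have hiv : T i v = w := congrArg Subtype.val hi
    refine ⟨i, ⟨hvw, Or.inl hiv⟩, ?_⟩
    rintro j ⟨hne, h | h⟩
    · exact hC v j i (h.trans hiv.symm)
    · have : T j v = w := by rw [← h, hA]
      exact hC v j i (this.trans hiv.symm)

lemma hop_of_data (t : ℕ) (l : Fin t → ℕ) (T : Fin 21 → Fin 22 → Fin 22)
    (J : Fin 22 → Fin 22 → Fin 21)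
    (R : Fin 21 → Fin 22 → Fin t) (B : Fin 21 → Fin t → Fin 22)
    (K : Fin 21 → Fin 22 → Fin 22)
    (hA : ∀ i v, T i (T i v) = v) (hB : ∀ i v, T i v ≠ v)
    (hJ : ∀ (i : Fin 21) (v : Fin 22), J v (T i v) = i)
    (hadj : ∀ i : Fin 21, i ≠ 0 → ∀ v,
      R i (T 0 v) = R i v ∧ R i (T i v) = R i v)
    (hb : ∀ i : Fin 21, i ≠ 0 → ∀ j, R i (B i j) = j)
    (hit : ∀ i : Fin 21, i ≠ 0 → ∀ v : Fin 22,
      (fun y => T i (T 0 y))^[(K i v : ℕ)] (B i (R i v)) = v ∨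
        T 0 ((fun y => T i (T 0 y))^[(K i v : ℕ)] (B i (R i v))) = v)
    (hcard : ∀ i : Fin 21, i ≠ 0 → ∀ j : Fin t,
      (Finset.univ.filter (fun v => R i v = j)).card = l j) :
    HOPSolvable 11 l := by
  refine ⟨mkM T, oneFact T J hA hB hJ, ?_⟩
  intro i hi
  refine components_card _ (R i) (B i) l ?_ (hb i hi) ?_ (hcard i hi)
  · intro v w h
    rcases h with ⟨-, h | h⟩ | ⟨-, h | h⟩
    · rw [← h]; exact ((hadj i hi v).1).symm
    · rw [← h]; exact (hadj i hi w).1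
    · rw [← h]; exact ((hadj i hi v).2).symm
    · rw [← h]; exact (hadj i hi w).2
  · intro v
    refine reach_of_iterate _ (T 0) (T i) ?_ ?_ _ _ (K i v : ℕ) (hit i hi v)
    · intro v
      exact Or.inl ⟨(hB 0 v).symm, Or.inl rfl⟩
    · intro v
      exact Or.inr ⟨(hB i v).symm, Or.inl rfl⟩


theorem hopP0 : HOPSolvable 11 (![22] : Fin 1 → ℕ) :=
  hop_of_data 1 ![22] (tT 63040860769384831239234851611537925310981303083713039155445005102197551355020852441415197781390964847494605214980934462761640056489830723763266105193344184333710120790429769594598606737004136773113961471782972468396228669013541373333711976090267520555502092884558463405391807630299760321652984712233594435877441366750667380010025478398694558064371567982795039545889678669758051981788756013814192453984777070854330538203277273118115666261001305087719433519035687104498911284486106337710902566330283252349190704768686638596443465750031462544998428714481110366390196688088093079625643330836639202707947391814784437681371843495550399269904467190442628699798090400930372130655668244169736006222810113) (tJ 1756384208050642804077521618527505878016702475397200815196750939392834225595488776677420070648617028677640621099446778054058196858744130377371859022735294012389619090399907699897795483637217347306897392746628079442138367459535392867007706892828790045908315322494490418445867652109451822276504612628458605950200552547824586744999259613840971136318609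12435636276354168236797399427493999949033389367018691909665008058300867801819961538017735182372144786936355755077087433588890660555265746349076944688666629646920776351243790004958181094223202645612768472037666039774415623742285916228246364725436781493810318636481929695630281546694581271214598846764640609821488102430483546229790783239165005181465718183978455200879976862228480)
    (tR 1 0 (by norm_num)) (tB 1 0) (tT 30924746507630139559254104334214167650188415387733215837523992604533689560422742987243291670712613972504553767181597767961462429358838362601278614778513234934954749787129580942943269419708034472526228530500099417342546380655171258519487648586364233575617701413060221534542901117928608529859114982449113010016200554508952637647463150014333488559085201966873098806414660673758897428783557529540938141157940384257776004017526141290160940034422383380344920261558804283150225666262337461568481453566943272792622065369223675487351193247826279880400935343086762460363982610870562932169751803342520486644531515860772326812717940060333440200393462781929602517734175953534805213162395858206044073750429696)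
    (by decide) (by decide) (by decide) (by decide) (by decide) (by decide) (by decide)

theorem hopP1 : HOPSolvable 11 (![4,18] : Fin 2 → ℕ) :=
  hop_of_data 2 ![4,18] (tT 15709365468678833264850506471173982265308421848031434318304328127381352267028986342875082510062074542241255703995543934819106581500490657789560262180134735909704757330010175691302311719903623944334062645402678477702357964554028358090998083463532643504165692715072029494924692871824821798564393866400934291333893005392618671782866751987874520509022260216427408782228165978264505634831707980932383622655649969536160925649490817554821037877490326901072208536118215836965836655655111820254946611417435598940488798373365039488643606073661009692779804034049239845153975387719707801182105010601339519743985985425891513255601643892364306384205169853622004000792131697780827635545787355104547652775250945) (tJ 97294846069675584650368757872101979101431998795859402666192607127830461982786910419817641737291979168045102869896229943966379201410899578010999546560553913975045889599491085220852168851622323490032833660653015958466389960263392014907588285100077535057341378245010176716118761637179883888461391795231613314451947977278328831205137535443962553499031406586541835620045395418203358258250647613637818252260701080357912128092189006027914980045409098926217749114838884149518181970222526250392634383664392597259894289430623285493444061461343524317667856271642864800783201448217226131747655088096725447675089767815586376826140495041184739403955942330914702911135438237346704065154500239386780813885997418278014795142708093151281095680)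
    (tR 2 7544463005830914178161283631465520512768780310838636028671973838933544744314225448869732302091484036661150902535310766926093498545873076796739521424987944290779492059885289167539452468074441142256286333840790822449217416798818131085176621469549829305206779646442773798463887970780179954328011091798747721735987943697047553656798675138086682085007733626824144702970964146640888988740785968265554232853236542643146090356468775199664822235787933248717528165280843385033471812940014787935322678470088855452239028535001125662911649286597665757185864317238471020987334732468228658723412603814588386425165639167108513042696980863128160206105456482069856222591086873582531625481290902699812201693184 (by norm_num)) (tB 2 3226445622939245153490931040317907730842491346249862724194304) (tT 7755730065697088867925613628206593387814425677810229384818725690515064925732437371362950637029302314846462913284440906862560474442267928996030792668908110583518679267063593614904764265343490654127405109829943858817856731645803681839698409255823958611497578721778503505515906185407432650142574318360259215132598372562635803326179757095336868269315537334801525917624192383519013227092363634143315561146567579737607433135312837079573798097392140364340932112358293389174523565056869939179481488782236567303479101980601211489782919668617685548707354994657767453698254099853725774507004166249093294967559627230254565287412487667256963982730305790197529903008333856809686839783385298859566914911338496)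
    (by decide) (by decide) (by decide) (by decide) (by decide) (by decide) (by decide)

theorem hopP2 : HOPSolvable 11 (![6,16] : Fin 2 → ℕ) :=
  hop_of_data 2 ![6,16] (tT 137064908847514536930710707254943259722833271404227687572125518179663338928133281554956423321753400243294434619669201030871170754339240543013812107878576450095240795936208586690411731321870853338960842488012796288813435568643396140417552411969331306394467495791943666865339734738965048626127611686411210121661690130089902253777567697659427711370252076637524408260139250264952821089336065851912412001278061083387039107181663640428358283401585259130662873014161796253324522803297998653016043018271770974357389314106320205711876646109463569955678531719897294993430776502353567533050519391123266570872610888649469282808268180343985122925654329707859837564389356681372342709458119088603246623733124097) (tJ 138810808379000645199025332337760314848847291339758705073074828872671834509367004665409869718545073815408670852337537182331428536632688876870394703596536293985050892042078901285323466146051913933670699852494273020363317270452985475602000495434958724582457540944343432605728368914600888458718849061655304797515478744352002919363392881428571050947088401808612521640722091173645941945255259848394671677561658712299806133659856690536757042062463134768086946792880008457545967375242179492479874064986687323542022059565597536033166301492274847079195971197488558073322832354303485652089635269758283305928000642122972845841335849904010182540371424936897633573124592545102609292353640844513883549063661039988462287994980536000624205824)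
    (tR 2 7725530117970856118430617044249962406360858892957040576837075146528538386738033950911577141520530257395965479399019732257220642568930116082805026193268869138671486506482066470140019655165234029592328332803170633064246795367279378342438233457027853774204532734422379086180482491364370263282092524722493554316632829165171247463582937107625274700561963266078851884148117170709319452874477302553659962601536803322376602150417547647568483777651617482627743826985800630123530007458405743512211381896716299218194555593510483363559112694694629314178131307532606670751127405772232200961095710300864574031028672101851414219354816057869517588652907333262576449132441314932474294230646378017756801279197184 (by norm_num)) (tB 2 3217026914324638027898763947174527007209438812113922764574720) (tT 15443545236313569349211190024819761527899412251588136418868720195781881829992909010633168400960637710226677854059663034716105730623331331307904644716636890021156132816039526274780710503269551032135305542648651799791927508678418068199902900443371215092274134954573993659891825053637372986009487134603166385551944613259907253921809700032616523308826838435885863737595622854516374943890242296100151780447053539199935542425795600548282366861358659566410236165892543549820791463944337271849914483143220298809286744389815103877365752460415652803811183332186562702115438504735605452015731509774857560676477576307029634460984402906353667045548824366111054659277942852298640835746225390002384576329023488)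
    (by decide) (by decide) (by decide) (by decide) (by decide) (by decide) (by decide)

theorem hopP3 : HOPSolvable 11 (![8,14] : Fin 2 → ℕ) :=
  hop_of_data 2 ![8,14] (tT 17607591610977128081316395379095719217138705202129691630429758932217997636659563770055322220294844273652239556395278953533833104253614258765471844561659815292348957673329200960921926749940955066026270283655131623057128990099026793813695985590512195178226478613280563081434265698305472790395024368119116451778600969642938498096916310897040251775627340628062151212307546438832359664931710479717512199785331974719626792551401565368460461988157126863210520070923804675244311740560540153477656136155814278517587964716711341375405469520118265362222892790214316535148684742707410445574714918198447849208410785470768554452199028282364276690654196931298520334370045715029808460044688355247427868184087553) (tJ 154293014034111612254453169602923116339156344508657335246348216137865335124636011721182828744878857967315594042256058695002895868572817037797668964304039268400599550448795718458080562208488839872717878894100592947669524693140665515247969921540793155936911599464418026794051869565548136414893517084185732702191481529381792400385600856077118660227764049856723206757354888290396208303656332116864111750970254940045305734176389016588507833237952058916704738594313160590365943329006186151151707087335426931673614908879160592115992047548926983697091088405934706084028088298399536587661156108009242897636023509069057341357568920864578251392388959486134955637516439542364780104523255229018005700428217737527620237242600891668671777792)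
    (tR 2 7725530110775902380341715773092079900563873573015679534879318525410485539315566260153575772579275651401353006255134286662179017241598990169930873104165924397910024953196351732295804360624496879620591182193016957909079919221604290872017675757981697436660677977737381478809542229127369361194222186916911577247826499661139730326393664395085783497882602725127000384359679740307776634390530304777469955125709151968649586133367287074218745921905866854146037310148217040726810272563932582714980580081641443847586226187643692972148849691662540881313477132981473357491186586009489838665016578176648318767482216123357248702873945179240900028653584018088111750286569831365174236556332689513423228335292416 (by norm_num)) (tB 2 103145433891463066851726154167119962215812145795501218682898432) (tT 46330532590716297402112172907888211455955803093581566238751686352186413420094401762866227911753875241682028246494672078377232001091985140179881542570681039383143228712595188608635104263641312745132187227910837747708038472090412213409312157952366516729247933110567970007019289591332562045900399749600129961600473599582043701653956398937869059685377757638344624018035967884712669504496404563419812275648694864183890236507491188068912072537368019970328863838106666694691673788869704051937218221192489515399512130449185799173660345836050805276848981959821272142915910955853229213407932806815207975861903563846243455447076999029006957373894093797157535564427643315698470526316364363748329727755026432)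
    (by decide) (by decide) (by decide) (by decide) (by decide) (by decide) (by decide)

theorem hopP4 : HOPSolvable 11 (![10,12] : Fin 2 → ℕ) :=
  hop_of_data 2 ![10,12] (tT 145860896148240400190744293833607606261548926818304512920995044867146145996530864030314337567737587917785783540226437019437699406014444501645329237560914519782219581271613898889637359487346551922425250032254683400087634514643895615037741930456975391089505031404746129789530245096805038231095116926537454819632135085382718658586542817624932408171325022523276172340969173301329111793235861740535915565115331012903318945624708758754705155813612297656453544756691072829819260253187907024330198045910519801594305955368887072179328804163548954676037130266933429456109539030338817699510022007273715459630616483079627367113752181764930115194952930428379192482432610697125650306210229712515476976380742657) (tJ 193612798184142256021201217621628152769811525917682526498301275111197096544981660951245863062873076917923020954268456710409923588988490441042867829161345543467456491909562511201864640577569800194516815781018491116288897662939045376534847236775062555714782871283719262910451114339000836706051251408121558692338884157101128576958340408403210991319969448849483302438053707769673463386588628043826903236313478392819602446712802178172371899360173634753529288266212826283084347093958644914638424632805635929112797653943970247161209545484488024313384695107510069390143405023308386731613072800594750433790217788415045927393059570864513603666376821051544516730601467651874058535737417042340388697803180589436972773451270894236905116672)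
    (tR 2 7725522757526155724780485146012888170605857670609006664085294848881149193413007404167264046355684253425442338587231737975071880196533645104470769451850225012628966130895931417694390929248423204229113076131983455203795418776897830104275517273420608930654654802777193579116634423395425937735379119064810721026965643667752337424004892461310623528705158166286209854083211064169443811809776750014256278035028468472409147055646644469560290637728244960025876154095944144058672947865009784644203610483530904782896480864866179584421492343464114110666891152390991840618822230996378023732601237404146219502470998302461710456986313483318873671723532523795157523153295596895892555244000899320505052849766400 (by norm_num)) (tB 2 205788601564661363487656296210180616277542264800863072217473024) (tT 15443515787339841449607571826994961307717612966396857946628992244624003959886336411754880730290731553804093058191588537362339905240355932720432156699538746143546258052007098031882083633341800793941358168957670582604282100241124326662450297537031925594189245614835104397654916987671544546726663892147481707534414206728121332839654128442050535854138520773432579623855726204545368419591933184604867817957000372383178125466704230144799326041710136106589865644270496655336829685339949352681956800642154928665817997026760975833728968680346104312303196037120396854762873415213951417908541949268323590097876850982368201642263406168529004893702504459683435337925962483681195665663347255766908244244561920)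
    (by decide) (by decide) (by decide) (by decide) (by decide) (by decide) (by decide)

theorem hopP5 : HOPSolvable 11 (![4,4,14] : Fin 3 → ℕ) :=
  hop_of_data 3 ![4,4,14] (tT 38418024769907295088959501791355570562631309694269205261855453905026319236999906949081053980513586810550198418577404298403751181690930688760874697116363393269661181471078695972563051440843448273562134100997032262435672463952457303885020320669845885018444611370351514266469189788207707985737843886114286241120966405460698215888845084764621361790666519492389223102119947433269313933313698824585008070511981794791973200765323659450267976391460437097403764633561610338619483684903631830540041924060750998901693016018640618392271914676794060318066903524069639885563156159619777761828641933590903569515984208194639818549882279321597201828058123370211141056742877354252615386888681431722455047481658369) (tJ 182085543913069345208367366693846091287736134619646514856201110547305430492355672587480344372716961311051899913988889654481526090747223650479247020521817327089695105242008285404395234254580879126310080291481573204895342701077482524839109348645452971708094688481394191806737638231777911565142964741848910579827921111655556347157671972200619283596960462582278233302240827317060177543677770324075596551896401892574126342304576277578547870457251274097304051481755597105279172385825605138696023965179416742155486343604992749793525461046616980321107826410691811779059074992608979059233475523791510248275730467821870709745352933337042167107059159536333296836708693702124662157860166578271322792662819047606313290665687419449335067648)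
    (tR 3 7733074580962648098492215420842219516566878402381411600139698607909065769126816822028482667609056042326685803331817928637743148679042489894193304848121475547683601963517925936844636924178763357269225243930442904082718429444687213569899382390965549206788824376105801080283492424663317167450686648315927161824780367962064450314099104542262552755768013923325537989229524608384017642086817745644657762884342170721339525835081568692975520161645288069329307758153345595017251602908367972970597176776620548693935869362400803885413560642754005098070600097138448334962841015601378306566138970890837195203007887575452060743971151188085730222327217939868827502897982459539485349497436742057916098848751616 (by norm_num)) (tB 3 4432745453967566182278676573037984503201737081597532641617281269516072625371385491973193465856) (tT 7748141432821130418194247139700442226621450074931458109247475148002304092422027435980937828055369553172585349484629568878386010043438168150778027044505614490948893694054863639800506578067036008430002909802395911013459765970177324957111100919136053190913221434026835700707059628726360949788393598944940487368363804912906871045721546684299382613357300247059362408948592444120932374362274759466692870133594905143249351902037108330727105981366122605320141987146063759607168701820872207140234544037732268060578682472995720180623558639006265509540332743825783278806280852165416257084255435237425693128998758507049871737472040216738955142164238780215329963348079999604393602057851125403828895013142528)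
    (by decide) (by decide) (by decide) (by decide) (by decide) (by decide) (by decide)

theorem hopP6 : HOPSolvable 11 (![4,6,12] : Fin 3 → ℕ) :=
  hop_of_data 3 ![4,6,12] (tT 108287527145716151505180318448864071189788354780154810020441964964287822681670833934524669708117897225454545256177561372796837893010100711026612369242424836656550415043691560305916803479230663181355956777368934295422399110716947318141661866349378302605961827985198270158969715385585165262108193243923684972273856974957647885414698643096633127798874633557323319461945942517456984324200088345270820422757854478736809456031691283802025925004930963187479857029971650918596631806467929422285176776979528205966085439389898256426262670092313317313057247996675748645728985968222785890079809332750699268655879508231977474894639080250853156937677278766663095229499714454492326664083656729663602156318559233) (tJ 146630720952137491825062222340515058939444666150436270967329743092736118454366100553152299047390113760217058814924480005914121584944087596153734793052957289772902617193719861963639205165285880807248504632791853887807532211154987015824567773172125863077352356045761742905761338835510222338035354553563577398243237638159477110298882390524726026032791550488676707017376112226878484417878297474258608742678922320622492738696627741406429862892622198988880119753345820150558393469065813681106358824668565978582470947448422960152290258328015124049212347988454566651621221900050371838533635361237172310276067059390561274830380462590473404877882555693009953498306324481612301932524678396623339556279895127056011963520018488515555301376)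
    (tR 3 7551816269616497181287933557951038008823868866519210662141961028173868368546281716595408041732921730607128787780021831923580637642255686036707951186055913243620856289725436553577061840921160645858371816898481637243560402169568297728400039419109908405210011480436209479050454349118929289009688287983053807649543437631889620846184679180934099883875460113441191697483688079601755251987508671959202893024001016875973448038130215638379980154795983113643433304086594346668524296168958622347481449916966553316646664548631423424740122445708395808446504235434750081861249174500996107834446957472825683057439025675425384819282238920797437430483233443320317645516408421249813670614241362558638081703936 (by norm_num)) (tB 3 4200496255598806543609464794194491336408879792458657070239241123130124669794477953332319354880) (tT 7733067206163158128830000617602697680537363011030263162539496184358542784642164790665721047131058749090823280838271689254661276086601424521941294073039665732999220449748244037846680316905048263910734007452543892033788284257035651105310619999939955786681590461677159995833856804347196764206964489745203436180198818874454209086051797960006913499441892807098067412869469327801511212247687392651325122513212740631441982268553243852711597496718627786593747188669245280139257729880402748643836038737795785849671481364823703974720739291824678432251755176503832220598526880256405971243068767837679105192459796003237141144966285845441186301863431076844223424485072218300466940124236783506755681196703744)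
    (by decide) (by decide) (by decide) (by decide) (by decide) (by decide) (by decide)

theorem hopP7 : HOPSolvable 11 (![4,8,10] : Fin 3 → ℕ) :=
  hop_of_data 3 ![4,8,10] (tT 78389806067288292940087387136948906310124102849898597732817073470371587043511931339393576059158996933707982834266365885906178932934427477708609815531095791177686243142079427512684014392483153398411406944194512801521350702343270803421363060091874736823044480635087975071868819035129333937884981802895326505845345067365524580681332509721253891480267001242719468208268378432619206577245168062599850975139969197321794329759394310761594314922704039578006951482918569338154984017929112229682824144319039112777104823461309777073043118825566469376293031302821930480071240355592446499230980160389183474382884116492066780866954454134622543286609717301518351457276000783338873318644698470333692373093125121) (tJ 136429969362134230156417337301545053599257849363857773974759134122609314900464583420936884157113422512538334454233677381523085161690723953823595427368739265338932493342810057817401344883820168930839200165442308331449720724507553793441003588088985807783989325303367940058279323575348742148146913768175655765478509054997431650650995748118067109697364492204758837334644568254852449388026525031490321162235490548724998874330075784229977574246336170547736772871675615277990550748495175564153720140108474504872038292981609092966579842870964835572521115735055964048613035544542466723907469078655305082151998014235318308098227282221296037360151473229381099357815953453866633125332804944931089948108126374297165998321606001627982573568)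
    (tR 3 7733074573788745906626587527325330144925988293019513907397781260658667859367139296783857867053996134123285698409557050896263053262895503510280848625064227317104431799946094863453674941814223948451453698198481492749248551355918307511139161162456877186156311327074433685690468875449524458660301443994110945189398819809032134682716036983240393098157231398702964674340297255750014077406394869454794586491862831102766559791574095100977995188361253756353629353116421848201778584666950424360350859936032206409851948486066167761686653135951964172399171702959384293025287202592491476648463491302837575849417687923239293258334783934156677054908234271929724138999361691891882716557352088436808746813882368 (by norm_num)) (tB 3 8474340209520599861392474588671975815303123496258824204608395025565947867682767758729897181184) (tT 15443523133394627518812803141462578652583762859016689656330584071644304503338526951640830968966430218087202759552281859508378956741258243792068910900606189276166019323051682348581593836147713308198318817488415637375398487172802113306193579582178727391167071679458045089157952116024797854276436457208007184246215022430097670361663781958631600260967552318116625916975197067417943348291066662480579593664253884764850987313116248341313353814376020074454833912365214336875403061950190967360098746859269590182276942755675087081372885514603884241342579175251543336311172597762057592761328474945742093418323564500014763178612729615202524691388824985756690946109475063080939717576671521975411627385683968)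
    (by decide) (by decide) (by decide) (by decide) (by decide) (by decide) (by decide)

theorem hopP8 : HOPSolvable 11 (![6,6,10] : Fin 3 → ℕ) :=
  hop_of_data 3 ![6,6,10] (tT 40330363954937160715301067373460951465774512695627742280206938379421588588882716055208078122122013644383917985567300408595835890682216822943885669748812064586754984798799653861637477050102399270352280398271400369201082691061104823480084211583917370329866055540972005409389796046868158280651204667862562366760114904510944215812714447250214789947557281021011589646286681608583099498949374679899503501437598645694521612252269664261478150330920321842195034399389101529493645668965060763736253507892147439851740499926374135205173965866587667873927534627518171008324034211300571924767439806093960623439769950259296843243293958451118715314291752120195710467874611493757647350886506857264817453870943233) (tJ 49373541852017644467997894479493042452540331287885587172636197738405990239963532687702842383861206733239586910837023332598823677053911693530947976783497247945206229654621993607413722153260550745452378764802696866635149937270152820209492599359863738262942876652265626601604283328123504147110809949787394599498864022160881140656828307325144609896093869081590121611249814394503525179598989587587306536236479034723192695045452652319728787032474366116121339410171123079768338446019119182371068886146928599642039279414856244215517551179178870980361946747324266419392996014915925438027887725180636014163206072760628027192786642945709813114684739805827849237536151455428257476491562421573602488204006336166361768822969573627559192576)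
    (tR 3 15451052875497004988262806279352777818828805255375287753050028158694904284566937561850255698568247642839450033858218238006909845072186535046550517273179046950697510686217037182729491904405145269343617725450913438848578083845204932595520319632866292874823204807403676334427236424604623136668653914201154101693386847687929395982274517398222496484385064522969772492705941878315784234863920839816250750196743237192468059615771929035422900432054597705804866302006073548611525664128079881043287956432431941692428469515996586614066871056581971558868687308930787397677321676594029380753296019554287170295436678909045131723388848423468113085237832015177064975826798275546188517833265514674713876076953600 (by norm_num)) (tB 3 8735068878976462710925830291752707984588167579841524454124127842476827814469677751824382164992) (tT 7748141418452281336467572503997359643783872217997979448974368351398904061208708171431574220343175050569496390361173471200410659249880129071479855596508922187265859299486936838036527739569539543499429589569632734956528355996351836629392009057877570549118521033265058624667950033714603636288094951516727438867964409441958854390557407775323428103463025186673768406329933798256804780812502306992357239289468839384112961914928569344034188782336530870561316464990692755046518684867874136624405769674638305495372211156312802834485274533841234377304215559231324070228183801807219135795872155378885429659208884275017681480690128906726579602390092823055481156438615143602753682871544078069540875617173504)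
    (by decide) (by decide) (by decide) (by decide) (by decide) (by decide) (by decide)

theorem hopP9 : HOPSolvable 11 (![6,8,8] : Fin 3 → ℕ) :=
  hop_of_data 3 ![6,8,8] (tT 116357825399242118027833227823944720074293213061337429272020075095062112774033823453265837827743409884442411948219343362142802488522622748370457026326950363014230847132211883304601150722992691056172940224113900343923141066268408809753737022921144623670807636252661616579980075264562666939775222406499765571827468617218398848798815308174232311413994312173830531281436248745167665992634225867937614171201311275366661988489178837271351095019052857633595274687409053278775415396457170458986228609797448108372139825471904934215720233057632849173880745311010912733811751639868401900978103744276375175181168328251099587911993617893167611686150180925849439887045394055267645682424840412714839684842327041) (tJ 99173736220842357146628413990709634377484023078395949572484435421435408739081026203228159460611780464558611377162860759189415724962537646234025391152431403668956408828534325919211722121648777371565998925911698671104661374719901861963409015424188719470007981378095587376347455620673627914445352066098433523028841173228712749632815497586204863711245482206918829604485991486332418264037243190300471885518829372738728238018844275068348392346868464275097140578466861827320084662337715375999596082693966018981546324728574280760374004320528805336016322588117620352082579598462923227233748303981104659354383301046162199772839443164128266518506497469306023286335373057156788593769383381074397145082376463881637159697278001257974900736)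
    (tR 3 15451060235927666434407804355173679486714122918272676145167625729896763408397487977319654190480858389308260924333886984334183833571099470972734356234183518604234496094211117311332635588041856498663777774599786262191444525245708009327761438536442030354416465811846610899341421943250257218129994628341376931393675977009516881546455943340102178830771815512280895290343379286233235402808491878470982713775845274679168955959677749514901086814561803371424730697243967917189064314798851090998146810659269520525874881411264327145203535044747284113810121450280641940950681490984402648837170145427624032779277427953809106435299353664550582456087023123751024578528532953044145289502762386604005112363876352 (by norm_num)) (tB 3 29207404025495589083119467552360541044864049389369359879925621651581394170777744484947716014080) (tT 7740611661967002121240651723372292588910114316431779134785702583478763698112789248089508210516066495892743064799430785544662644692227626173926356407871816553823511504525234643184323533853922582616670672120601671867641932503231652295115257773889742589542537820059413119640225271559169191001009546820979562929570435344544698339916689910791870252501822090100947358732795326774503231168481746818110340102538733647797544651681998281865875589078184259306457371934476988769747460197775549601111855324875164063262564888846342260150699430991494684264363528444460786015337573058028976610688098615205568524260760061495007275097912180581705633530292135607801291208024141384297421778369692147367820748914688)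
    (by decide) (by decide) (by decide) (by decide) (by decide) (by decide) (by decide)

theorem hopP10 : HOPSolvable 11 (![4,4,4,10] : Fin 4 → ℕ) :=
  hop_of_data 4 ![4,4,4,10] (tT 98719133638228126866789004282511081036096674072637257913138576339785441596342017390091708785840297808142489238261700455018124920720729663952173326992504399547391946123693132907847843360742990454954890624710905642871740497603579830427425271007274285373337290294006524206559426674616532942782450062830049846709526921722713300673810613034606781679227765429036730699399369903691436377799172917189961953103500894371115387924204337309234961214803374170057811064383001318178525650406330471878354060174872582859889990317627648647202170675555751094756271564351815965862122721136476832948423011895654047619614263788896139104732991001937720362888799192610296148813802330964339701160763631731573096799341569) (tJ 99339461663596380039892321665567871521254142309688268162303222000892089519726183184633045503744870012262232568639722383929171424990041720631759755057879675014169407540314998975507827039584438172788900994446560632540625225823516593443017468203218325133241151931103500819175430055779760036603388008561550451160618819619184650228223527083063821878676708877695946843197905784441824757467167021351071057687989466430959627761082316109381326588518928292111714979401490810787640061062469793354716283303119455872136372170845306143912798379421453877835947567429926607896437165015234286920860221936568073005429662497792636789131358546336587489896165460525996448124021976386418382876141742725746201229655344451304086559768556154382331904)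
    (tR 4 23153979060626090020415119594289965701731581567100672533189130800771178498205553755930606217928634679936619271901010802278692827617969154610645895347291153509554952169719347786369761352899567620772955206570383968707837555683239570749407262113582724963320632557667710953724048847005643803180932832649588761534673679104777288600387959493107013586787418365264595855211671027847970910803790225733268873376343071996699711069101970017477940321822714485788114674116301501421672869078559137022825552092475488805800356802193534381848704726992296933749171247883982073090040969682303994517985003441196275460437634085509684925698197638164524761594798883266489435808964062013417753330142706203358380762857472 (by norm_num)) (tB 4 21489524635924209417547627023331769572209016981438722897077457726510702490212108570070477415741765341646378168639608600920064) (tT 15443537854284000846167232593484610241931241650541304749319168815891644242365071478212034384386336582676295382342015151565067946811996822262905094049824209725298041737148756673103296451576223770918807999870671646627569626085053209523719584642536591095900644016454602798554856315984527688225575572777161802698762517016152276329447181820809687305751456893358900523440305736635725730713656048591916511776064251994857607021797666207847774537969518411752180498432168418834957084178254437872942819313730345180958407981260813648141152066367185443025312140651982682118926374314465765969299134422582744229925071309344139171757240064545100098393958170105348125561930374154240366310913355045939087264448512)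
    (by decide) (by decide) (by decide) (by decide) (by decide) (by decide) (by decide)

theorem hopP11 : HOPSolvable 11 (![4,4,6,8] : Fin 4 → ℕ) :=
  hop_of_data 4 ![4,4,6,8] (tT 138804436254241463432298745377243520125408005423825756540839717065032869570252299493432710968163701351133658791524964042777128485351897981769311481158408462535394859515451437802039256362531424082645233769200644049666623628345628757419794420704478236524746319310321826614804731811018385400182746429342105632929648856434506098279586152673519320655230119734367803838105356660970484758206658425685075285270558943207887788878944740108744952970678592013210678850366805434798496299297207494710162021031443956014229002636448359163603185303067952073115348385454237016586089123021337974561316791753806844752032103200297059362311945225940785262918411829291391538987415826918400520217587062293632092300446721) (tJ 53536087582326181062978539399839773189917043171318502634409643110998709861706373301159695706245927621303214527017473874709020889740006749838486854028368940207574096388106975898575893500871913184690785906975513111429012441204786802276152005161006221354704835245754738770328387102306243266808926388955839071697612430464677080426762937070577894483493021846957784756988963696269859298526320228478294483313340089651805896277221384276572990888024208259263069734156643336817073293365778119674970417043625516900535332217891226001908076455910713953460028127849846192811717953961096524032927390535362780840582835515830466052291466980264270094496477601704012211438193140458313064158519634707220351210826681087436169272375271195242744832)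
    (tR 4 23176590353891496230835099966972573145462310001879630107117268918337341141299255129470465908711081026024180195495017715930810482505254323457134293413717395530822826885542554730421488008860131571950955947456033026616270273508737957013238644907442814917774058861204990757294010250028207080649452656676289601658558852387486385734969751759395181930352407115696334936259620156862747485604625664442032427217706158601718761788881625162909809628160096245827049063452039623365282904501862221274820236072173247675096187317033119907455131393298431391628357226872373243130519216161891467249151118285411061924512927739756576236279372294783873967069896168222647595150333490545794276138448657980974320284860416 (by norm_num)) (tB 4 1185284166010325983253830067066537276613657921242795243477385318558067311119980031938382800372952622661030842173194835685539840) (tT 15443530486637334109009224248481587646271886096421514512507889435744531449466861084125969787094554232649610735102785640316039175678028803602054613066068440660475138635116561368801554520652482234239100712805896219565059791527618798615420639395510198121888307127977002709020859655718703965716216597090830107902495203720407515495366386697274959027793344872463786154111410778730294903667260930459443106581027515311939327256197207123776952436596775663151654124385434273945716800641920531950854305456402537498848313362660743161806581417970465455563635413339623044353795963210129236382665063438144103005571845120369798178339105496880645455375164836311546759042773070394398949627557158659605119153209344)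
    (by decide) (by decide) (by decide) (by decide) (by decide) (by decide) (by decide)

theorem hopP12 : HOPSolvable 11 (![4,6,6,6] : Fin 4 → ℕ) :=
  hop_of_data 4 ![4,6,6,6] (tT 143990056350707875054862682601798606987575141627272399377868952873270278817461543566308861369753691596320725576791184753365980032367017114532741402589567969158438538868419457675232464306476028675533947659482350029756713562878702913283142288694480657289750014844545540223992913832419087480093558216138385245273264604690906067753989053825779543600355794301274965349637339155478771676793391990928087232714182599276487502106476021888552109976925097528495574628858907124370611306527298350351373408556913554804351019407148127332690786453289857887939877500174386918100492646830042391780954511154320771838476848472780027559852549079682053693028096770109469350981836815679603970534729033712436129513409537) (tJ 192831422920822129081226320083194741777951579140795378902927290995786250295732313769495173339573677846357863104014111541190108094109533533468425646713597155282029487536768859317729875166404178586996669365853695549285230376305267138187888635325450567312005444437835947421928308278582987617993790120494501267412057081729092580468628733671620594130232186291367066737385496877492525722824248607517561288922965845193606436973687358100793220555931366400388473368693831231084617911884075067776197527260968859648849794885424369704870101026987597205641096463075536275237012487831834121243430090442760609745887346481331854054237789315361441071256099213276513770985323106722067590649687859272214234086360560481040386163200878881209231360)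
    (tR 4 23176582979070927308518823956178998860212249072493943507496844301025771307084394798692193631687538659136012220895767092046021213377212146593010383725269460551149363229841839317954504157271799948879038843638012920211821588546034374159514379380170934449688566558859719467018723680415381570991134898480815543783390881437424664543518848783652939594602128690125721939556028543975191033501399207491187649652845244527933770377406656570838057821694430092828049141661259558815033465096760520244874654635455694908570166854466564646052019146475726869272845609527801358291756455850309758624064325553693970103331933129610423453292406412212795635428690342694500193014414323243358566781906151292093930168909824 (by norm_num)) (tB 4 513005904896564993076841470840925991887029471706862957043052821319176980499407068711221857271933552529658353539902202328383488) (tT 7733074573781719577922449620742522896064607242255027061998041217535428866790250783409922165283389369030847354528155872633558989077069227019120644400300043950476307842604623751375274865118277489429323722729875693099538088104515265344757341932022262936789229177102232447056621031434966412485848062113544601644936972810608645720812217810043253310298691112906769798935884747796597506331619324478826646089455513972300186369548119367193313343553488852413583918464224091702930364459669899936234156073991766623572677831373837520255644545110270956352650587990541577134829250027462022192394410017505362379489425976018839136328100562611471886343204949758414375083951733977816896966022747257539458565668864)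
    (by decide) (by decide) (by decide) (by decide) (by decide) (by decide) (by decide)

theorem hopP13 : HOPSolvable 11 (![4,4,4,4,6] : Fin 5 → ℕ) :=
  hop_of_data 5 ![4,4,4,4,6] (tT 130980254463534166952804754494698685803106621771811331760362012856716321700680678379095102223976392492336965960342175458718827237964424814656652478871272279257515245376169130840885939015101839711504405783678127055979447659617997505513880320548860858506561997849875125804103160361967668393309421208868914558551856431826057718383035156020895659763190396694426200935815748448439148664067925599306339049419165538899895872095245037087276273435837802379751003836477584963869233807886619033415727026996224921562891973949306892693383147399819400716220482076010365002417775925099954121975290917682304876392445790761228982584063825470584368000794997255756162181440488301743204265800861993483301002360720385) (tJ 156429788541404972584787025832458438575656564287286531208559949196095072773387613425313604369982695546206521799858897853506882845661920313934028928496211603183214528795607252023747698594561403916890055367648312963798441221402997445425686123823870970810661705520546992736029402334153169915379948120925704582750114166341186892078942789673473420632612383952841000353384114541047734263327589922658066563797857074609888126307876665380040098159874760926501927727582857738111539185313781605296224286505916594105150101020391132805304878461112745043746039371905048464945969658276919233274066231716296064084495899749472971984011077119087520520272532348332443316101565199804398626923636061916576583028382248334787834503227934768480003072)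
    (tR 5 23184127434895836557068990730826935057659178540242661139564874966633409242660111694135136160328157329754471037808161131835919265052888038310466286531348178275217932271751598111063922344986618036458976767476574594481202698585540201142522593585293213757243158192205646018596405435324780843879692527983280411285770086867176113084527023963253487118423481508462385161867532864111525608673450333530103052034408917148409470347341561564501438817659149821572234222103438289632911715546184477465648815745384601703288203198839998820562461217850357560945934231028469020675519525245469177692356442753481166127370753597364371755686605870065311334436387365567191017679068433552735016724221244183948208094838784 (by norm_num)) (tB 5 1743650114235707984750754973489965457202773741488786684904057064074051842390998959562953489952651608883334364632902913465255481405045570608788651280221339648) (tT 7725522757526162579722256437116890519375140996742177845493674747606458366410888896620882003903323608261502542793841494252946068600640504908852998504948795469922971312006119087677258371405571256283490907009278050495170831115532848972873101073209154773232612918683133587675718359473050952761117876284383307286610064597279324333818322239304153309670858013506705649494217449530710463099720396935193293664134089850038853522975536368754322224787647969185326884622202524595251504065971449583568004673502795936619090924655871671573486717229741511309350378080211260128604461120524213853235685813242899117763855412927313079106774535585662033112333938565610418770265365700896655170618616116441439375720448)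
    (by decide) (by decide) (by decide) (by decide) (by decide) (by decide) (by decide)

lemma hop_perm {n t : ℕ} (l : Fin t → ℕ) (σ : Equiv.Perm (Fin t))
    (h : HOPSolvable n (l ∘ σ)) : HOPSolvable n l := by
  obtain ⟨M, hM, hcomp⟩ := h
  refine ⟨M, hM, fun i hi => ?_⟩
  obtain ⟨e, he⟩ := hcomp i hi
  exact ⟨e.trans σ, fun c => he c⟩

lemma sorted_case (t : ℕ) (ht : 1 ≤ t) (m : Fin t → ℕ) (hmono : Monotone m)
    (hm : ∀ i, 2 ≤ m i) (hsum : ∑ i, m i = 11) :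
    HOPSolvable 11 (fun i => 2 * m i) := by
  have h2t : 2 * t ≤ 11 := by
    have h1 : 2 * t = ∑ _i : Fin t, 2 := by simp [Finset.sum_const, Finset.card_univ, mul_comm]
    have h2 : ∑ _i : Fin t, 2 ≤ ∑ i, m i := Finset.sum_le_sum (fun i _ => hm i)
    omega
  have ht5 : t ≤ 5 := by omega
  interval_cases t
  · -- t = 1
    obtain ⟨a, ha⟩ : ∃ x, m 0 = x := ⟨_, rfl⟩
    have e0 : 2 ≤ a := ha ▸ hm 0
    have hs : a = 11 := by
      have := hsum
      rw [Fin.sum_univ_one] at this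
      omega
    have hcases : (a = 11) := by omega
    rcases hcases with ⟨rfl⟩
    · have hmeq : (fun i : Fin 1 => 2 * m i) = ![22] := by
        funext i; fin_cases i <;> simp [ha]
      rw [hmeq]; exact hopP0
  · -- t = 2
    obtain ⟨a, ha⟩ : ∃ x, m 0 = x := ⟨_, rfl⟩
    obtain ⟨b, hb⟩ : ∃ x, m 1 = x := ⟨_, rfl⟩
    have e0 : 2 ≤ a := ha ▸ hm 0
    have e1 : 2 ≤ b := hb ▸ hm 1
    have o0 : a ≤ b := ha ▸ hb ▸ hmono (show (0:Fin 2) ≤ 1 by decide)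
    have hs : a+b = 11 := by
      have := hsum
      rw [Fin.sum_univ_two] at this
      omega
    have hcases : (a = 2 ∧ b = 9) ∨ (a = 3 ∧ b = 8) ∨ (a = 4 ∧ b = 7) ∨ (a = 5 ∧ b = 6) := by omega
    rcases hcases with ⟨rfl,rfl⟩|⟨rfl,rfl⟩|⟨rfl,rfl⟩|⟨rfl,rfl⟩
    · have hmeq : (fun i : Fin 2 => 2 * m i) = ![4,18] := by
        funext i; fin_cases i <;> simp [ha, hb]
      rw [hmeq]; exact hopP1
    · have hmeq : (fun i : Fin 2 => 2 * m i) = ![6,16] := by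
        funext i; fin_cases i <;> simp [ha, hb]
      rw [hmeq]; exact hopP2
    · have hmeq : (fun i : Fin 2 => 2 * m i) = ![8,14] := by
        funext i; fin_cases i <;> simp [ha, hb]
      rw [hmeq]; exact hopP3
    · have hmeq : (fun i : Fin 2 => 2 * m i) = ![10,12] := by
        funext i; fin_cases i <;> simp [ha, hb]
      rw [hmeq]; exact hopP4
  · -- t = 3
    obtain ⟨a, ha⟩ : ∃ x, m 0 = x := ⟨_, rfl⟩
    obtain ⟨b, hb⟩ : ∃ x, m 1 = x := ⟨_, rfl⟩
    obtain ⟨c, hc⟩ : ∃ x, m 2 = x := ⟨_, rfl⟩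
    have e0 : 2 ≤ a := ha ▸ hm 0
    have e1 : 2 ≤ b := hb ▸ hm 1
    have e2 : 2 ≤ c := hc ▸ hm 2
    have o0 : a ≤ b := ha ▸ hb ▸ hmono (show (0:Fin 3) ≤ 1 by decide)
    have o1 : b ≤ c := hb ▸ hc ▸ hmono (show (1:Fin 3) ≤ 2 by decide)
    have hs : a+b+c = 11 := by
      have := hsum
      rw [Fin.sum_univ_three] at this
      omega
    have hcases : (a = 2 ∧ b = 2 ∧ c = 7) ∨ (a = 2 ∧ b = 3 ∧ c = 6) ∨ (a = 2 ∧ b = 4 ∧ c = 5) ∨ (a = 3 ∧ b = 3 ∧ c = 5) ∨ (a = 3 ∧ b = 4 ∧ c = 4) := by omega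
    rcases hcases with ⟨rfl,rfl,rfl⟩|⟨rfl,rfl,rfl⟩|⟨rfl,rfl,rfl⟩|⟨rfl,rfl,rfl⟩|⟨rfl,rfl,rfl⟩
    · have hmeq : (fun i : Fin 3 => 2 * m i) = ![4,4,14] := by
        funext i; fin_cases i <;> simp [ha, hb, hc]
      rw [hmeq]; exact hopP5
    · have hmeq : (fun i : Fin 3 => 2 * m i) = ![4,6,12] := by
        funext i; fin_cases i <;> simp [ha, hb, hc]
      rw [hmeq]; exact hopP6
    · have hmeq : (fun i : Fin 3 => 2 * m i) = ![4,8,10] := by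
        funext i; fin_cases i <;> simp [ha, hb, hc]
      rw [hmeq]; exact hopP7
    · have hmeq : (fun i : Fin 3 => 2 * m i) = ![6,6,10] := by
        funext i; fin_cases i <;> simp [ha, hb, hc]
      rw [hmeq]; exact hopP8
    · have hmeq : (fun i : Fin 3 => 2 * m i) = ![6,8,8] := by
        funext i; fin_cases i <;> simp [ha, hb, hc]
      rw [hmeq]; exact hopP9
  · -- t = 4
    obtain ⟨a, ha⟩ : ∃ x, m 0 = x := ⟨_, rfl⟩
    obtain ⟨b, hb⟩ : ∃ x, m 1 = x := ⟨_, rfl⟩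
    obtain ⟨c, hc⟩ : ∃ x, m 2 = x := ⟨_, rfl⟩
    obtain ⟨d, hd⟩ : ∃ x, m 3 = x := ⟨_, rfl⟩
    have e0 : 2 ≤ a := ha ▸ hm 0
    have e1 : 2 ≤ b := hb ▸ hm 1
    have e2 : 2 ≤ c := hc ▸ hm 2
    have e3 : 2 ≤ d := hd ▸ hm 3
    have o0 : a ≤ b := ha ▸ hb ▸ hmono (show (0:Fin 4) ≤ 1 by decide)
    have o1 : b ≤ c := hb ▸ hc ▸ hmono (show (1:Fin 4) ≤ 2 by decide)
    have o2 : c ≤ d := hc ▸ hd ▸ hmono (show (2:Fin 4) ≤ 3 by decide)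
    have hs : a+b+c+d = 11 := by
      have := hsum
      rw [Fin.sum_univ_four] at this
      omega
    have hcases : (a = 2 ∧ b = 2 ∧ c = 2 ∧ d = 5) ∨ (a = 2 ∧ b = 2 ∧ c = 3 ∧ d = 4) ∨ (a = 2 ∧ b = 3 ∧ c = 3 ∧ d = 3) := by omega
    rcases hcases with ⟨rfl,rfl,rfl,rfl⟩|⟨rfl,rfl,rfl,rfl⟩|⟨rfl,rfl,rfl,rfl⟩
    · have hmeq : (fun i : Fin 4 => 2 * m i) = ![4,4,4,10] := by
        funext i; fin_cases i <;> simp [ha, hb, hc, hd]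
      rw [hmeq]; exact hopP10
    · have hmeq : (fun i : Fin 4 => 2 * m i) = ![4,4,6,8] := by
        funext i; fin_cases i <;> simp [ha, hb, hc, hd]
      rw [hmeq]; exact hopP11
    · have hmeq : (fun i : Fin 4 => 2 * m i) = ![4,6,6,6] := by
        funext i; fin_cases i <;> simp [ha, hb, hc, hd]
      rw [hmeq]; exact hopP12
  · -- t = 5
    obtain ⟨a, ha⟩ : ∃ x, m 0 = x := ⟨_, rfl⟩
    obtain ⟨b, hb⟩ : ∃ x, m 1 = x := ⟨_, rfl⟩
    obtain ⟨c, hc⟩ : ∃ x, m 2 = x := ⟨_, rfl⟩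
    obtain ⟨d, hd⟩ : ∃ x, m 3 = x := ⟨_, rfl⟩
    obtain ⟨e, he⟩ : ∃ x, m 4 = x := ⟨_, rfl⟩
    have e0 : 2 ≤ a := ha ▸ hm 0
    have e1 : 2 ≤ b := hb ▸ hm 1
    have e2 : 2 ≤ c := hc ▸ hm 2
    have e3 : 2 ≤ d := hd ▸ hm 3
    have e4 : 2 ≤ e := he ▸ hm 4
    have o0 : a ≤ b := ha ▸ hb ▸ hmono (show (0:Fin 5) ≤ 1 by decide)
    have o1 : b ≤ c := hb ▸ hc ▸ hmono (show (1:Fin 5) ≤ 2 by decide)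
    have o2 : c ≤ d := hc ▸ hd ▸ hmono (show (2:Fin 5) ≤ 3 by decide)
    have o3 : d ≤ e := hd ▸ he ▸ hmono (show (3:Fin 5) ≤ 4 by decide)
    have hs : a+b+c+d+e = 11 := by
      have := hsum
      rw [Fin.sum_univ_five] at this
      omega
    have hcases : (a = 2 ∧ b = 2 ∧ c = 2 ∧ d = 2 ∧ e = 3) := by omega
    rcases hcases with ⟨rfl,rfl,rfl,rfl,rfl⟩
    · have hmeq : (fun i : Fin 5 => 2 * m i) = ![4,4,4,4,6] := by
        funext i; fin_cases i <;> simp [ha, hb, hc, hd, he]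
      rw [hmeq]; exact hopP13

end HOPAux

theorem hop_solvable_sum_eq_11 (t : ℕ) (ht : 1 ≤ t) (m : Fin t → ℕ)
    (hm : ∀ i, 2 ≤ m i) (hsum : ∑ i, m i = 11) :
    HOPSolvable 11 (fun i => 2 * m i) := by
  apply HOPAux.hop_perm (fun i => 2 * m i) (Tuple.sort m)
  exact HOPAux.sorted_case t ht (m ∘ Tuple.sort m) (Tuple.monotone_sort m)
    (fun i => hm _) (by rw [← hsum]; exact Equiv.sum_comp (Tuple.sort m) m)
end
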